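/- arXiv:2602.00193 — 15 statements merged into one kernel-verified Lean document; each statement's English description precedes it below -/
import Mathlib

section
/- Let J = diag(β_k)·Q − diag(r_k+γ_k) (the Jacobian block of the disease-free equilibrium of the SIS coinfection model with host classes). If R_0 < 1 then every eigenvalue of J has strictly negative real part (the disease-free equilibrium is linearly stable); if R_0 > 1 then J has an eigenvalue with strictly positive real part (the disease-free equilibrium is unstable). -/
/-!
Write `d k = r k + γ k` and `A = diag(β / d) * Q`; `A` is nonnegative and irreducible.
Perron–Frobenius, obtained from the Collatz–Wielandt maximum of `c` over `c • v ≤ A *ᵥ v` with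
`0 ≤ v ≠ 0`, gives `A *ᵥ u = ρ • u` with `u > 0`. Comparing `v` with the smallest multiple of `u`
above it shows that every such `c` is at most `ρ`; applied to `|v|` for a complex eigenvector `v`,
this makes `ρ` the spectral radius, so `R₀ = ρ`.

If `J v = μ v` with `0 ≤ re μ`, then `|v| ≤ A |v|` because `d k ≤ ‖μ + d k‖`, hence `1 ≤ R₀`.
Conversely `J + m • 1` is nonnegative and irreducible for large `m`, so `J w = s w` for some
`w > 0` and real `s`; if `s ≤ 0` then `A w ≤ w`, hence `R₀ ≤ 1`.
-/

open Matrix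

/-- Spectral radius of a real matrix, via its complex spectrum. -/
noncomputable def specRad {n : Type*} [Fintype n] [DecidableEq n] (M : Matrix n n ℝ) : ℝ :=
  sSup {x : ℝ | ∃ μ : ℂ, μ ∈ spectrum ℂ (M.map Complex.ofReal) ∧ x = ‖μ‖}

open Finset

section

variable {K : Type*}

theorem ne_zero_of_forall_pos [Nonempty K] {w : K → ℝ} (hw : ∀ k, 0 < w k) : w ≠ 0 :=
  fun h => (hw (Classical.arbitrary K)).ne' (congrFun h _)

theorem norm_comp_ne_zero {E : Type*} [NormedAddCommGroup E] {v : K → E} (hv : v ≠ 0) :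
    (fun k => ‖v k‖) ≠ 0 :=
  fun h => hv (funext fun k => norm_eq_zero.1 (congrFun h k))

theorem exists_pos_smul_le [Fintype K] [Nonempty K] {z y : K → ℝ} (hz : ∀ k, 0 < z k)
    (hy : ∀ k, 0 < y k) : ∃ ε : ℝ, 0 < ε ∧ ε • z ≤ y := by
  obtain ⟨k, -, hk⟩ := exists_min_image univ (fun k => y k / z k) univ_nonempty
  exact ⟨y k / z k, div_pos (hy k) (hz k), fun i => (le_div_iff₀ (hz i)).1 (hk i (mem_univ i))⟩

end

namespace Matrix

variable {K : Type*} [Fintype K]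

theorem apply_mul_le_mulVec {A : Matrix K K ℝ} (hA : ∀ i j, 0 ≤ A i j) {w : K → ℝ} (hw : 0 ≤ w)
    (k j : K) : A k j * w j ≤ (A *ᵥ w) k :=
  single_le_sum (f := fun i => A k i * w i) (fun i _ => mul_nonneg (hA k i) (hw i)) (mem_univ j)

theorem mulVec_mono {A : Matrix K K ℝ} (hA : ∀ i j, 0 ≤ A i j) {v w : K → ℝ} (h : v ≤ w) :
    A *ᵥ v ≤ A *ᵥ w := fun k =>
  sum_le_sum fun j _ => mul_le_mul_of_nonneg_left (h j) (hA k j)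

theorem mulVec_nonneg {A : Matrix K K ℝ} (hA : ∀ i j, 0 ≤ A i j) {w : K → ℝ} (hw : 0 ≤ w) :
    0 ≤ A *ᵥ w := by
  simpa using mulVec_mono hA hw

theorem mulVec_pos {P : Matrix K K ℝ} (hP : ∀ i j, 0 < P i j) {w : K → ℝ} (hw : 0 ≤ w)
    (hw0 : w ≠ 0) (k : K) : 0 < (P *ᵥ w) k := by
  obtain ⟨j, hj⟩ := Function.ne_iff.1 hw0
  exact (mul_pos (hP k j) ((hw j).lt_of_ne' hj)).trans_le
    (apply_mul_le_mulVec (fun i j => (hP i j).le) hw k j)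

theorem le_of_smul_le_mulVec_of_mulVec_le_smul {A : Matrix K K ℝ} (hA : ∀ i j, 0 ≤ A i j)
    {c ρ : ℝ} {w u : K → ℝ} (hw : 0 ≤ w) (hw0 : w ≠ 0) (hu : ∀ k, 0 < u k)
    (hcw : c • w ≤ A *ᵥ w) (hAu : A *ᵥ u ≤ ρ • u) : c ≤ ρ := by
  obtain ⟨j, hj⟩ := Function.ne_iff.1 hw0
  have : Nonempty K := ⟨j⟩
  obtain ⟨k, -, hk⟩ := exists_max_image univ (fun k => w k / u k) univ_nonempty
  set t := w k / u k
  have hwt : w ≤ t • u := fun i => by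
    simpa [div_le_iff₀ (hu i), mul_comm] using hk i (mem_univ i)
  have hwk : w k = t * u k := (div_mul_cancel₀ _ (hu k).ne').symm
  have ht : 0 < t := (div_pos ((hw j).lt_of_ne' hj) (hu j)).trans_le (hk j (mem_univ j))
  refine le_of_mul_le_mul_right ?_ (hwk ▸ mul_pos ht (hu k))
  calc c * w k ≤ (A *ᵥ w) k := hcw k
    _ ≤ (A *ᵥ (t • u)) k := mulVec_mono hA hwt k
    _ = t * (A *ᵥ u) k := by rw [mulVec_smul]; rfl
    _ ≤ t * (ρ * u k) := mul_le_mul_of_nonneg_left (hAu k) ht.le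
    _ = ρ * w k := by rw [hwk]; ring

theorem exists_collatzWielandt_max [Nonempty K] {A : Matrix K K ℝ} (hA : ∀ i j, 0 ≤ A i j) :
    ∃ (r : ℝ) (w : K → ℝ), 0 ≤ w ∧ w ≠ 0 ∧ r • w ≤ A *ᵥ w ∧
      ∀ (c : ℝ) (v : K → ℝ), 0 ≤ v → v ≠ 0 → c • v ≤ A *ᵥ v → c ≤ r := by
  -- Comparing with the all-ones vector bounds every admissible `c` by `C`, so `r` is the
  -- maximum of `c` over a compact subset of `[0, C] × stdSimplex ℝ K`.
  set C := ∑ i, ∑ j, A i j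
  have hC : ∀ (c : ℝ) (v : K → ℝ), 0 ≤ v → v ≠ 0 → c • v ≤ A *ᵥ v → c ≤ C := by
    refine fun c v hv hv0 hcv => le_of_smul_le_mulVec_of_mulVec_le_smul hA hv hv0
      (fun _ => one_pos) hcv fun i => ?_
    simpa [mulVec, dotProduct] using
      single_le_sum (f := fun i => ∑ j, A i j) (fun i _ => sum_nonneg fun j _ => hA i j)
        (mem_univ i)
  set T := Set.Icc 0 C ×ˢ stdSimplex ℝ K ∩ {p : ℝ × (K → ℝ) | p.1 • p.2 ≤ A *ᵥ p.2}
  have hT : IsCompact T := (isCompact_Icc.prod (isCompact_stdSimplex ℝ K)).inter_right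
    (isClosed_le (by fun_prop) (by fun_prop))
  obtain ⟨w₀, hw₀⟩ := (isPathConnected_stdSimplex K).nonempty
  have hT0 : ((0 : ℝ), w₀) ∈ T :=
    ⟨⟨⟨le_rfl, sum_nonneg fun i _ => sum_nonneg fun j _ => hA i j⟩, hw₀⟩,
      by simpa using mulVec_nonneg hA hw₀.1⟩
  obtain ⟨⟨r, w⟩, ⟨⟨hrC, hw⟩, hrw⟩, hmax⟩ :=
    hT.exists_isMaxOn ⟨_, hT0⟩ continuous_fst.continuousOn
  have hw0 : w ≠ 0 := by
    rintro rfl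
    simpa using hw.2
  refine ⟨r, w, hw.1, hw0, hrw, fun c v hv hv0 hcv => ?_⟩
  rcases le_or_gt c 0 with hc | hc
  · exact hc.trans hrC.1
  obtain ⟨j, hj⟩ := Function.ne_iff.1 hv0
  have hs : 0 < ∑ i, v i := sum_pos' (fun i _ => hv i) ⟨j, mem_univ j, (hv j).lt_of_ne' hj⟩
  have hsv : (∑ i, v i)⁻¹ • v ∈ stdSimplex ℝ K :=
    ⟨fun i => mul_nonneg (inv_nonneg.2 hs.le) (hv i), by
      simp [← mul_sum, inv_mul_cancel₀ hs.ne']⟩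
  have hcsv : c • ((∑ i, v i)⁻¹ • v) ≤ A *ᵥ ((∑ i, v i)⁻¹ • v) := by
    rw [smul_comm, mulVec_smul]
    exact smul_le_smul_of_nonneg_left hcv (inv_nonneg.2 hs.le)
  exact hmax (a := (c, _)) ⟨⟨⟨hc.le, hC c v hv hv0 hcv⟩, hsv⟩, hcsv⟩

theorem norm_map_ofReal_mulVec_le {B : Matrix K K ℝ} (hB : ∀ i j, 0 ≤ B i j) (v : K → ℂ)
    (k : K) : ‖(B.map Complex.ofReal *ᵥ v) k‖ ≤ (B *ᵥ fun j => ‖v j‖) k :=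
  calc ‖∑ j, (B k j : ℂ) * v j‖ ≤ ∑ j, ‖(B k j : ℂ) * v j‖ := norm_sum_le _ _
    _ = (B *ᵥ fun j => ‖v j‖) k := by simp [mulVec, dotProduct, abs_of_nonneg (hB _ _)]

variable [DecidableEq K]

theorem pow_mulVec_eq_smul {R : Type*} [CommSemiring R] {A : Matrix K K R} {r : R} {w : K → R}
    (h : A *ᵥ w = r • w) (n : ℕ) : A ^ n *ᵥ w = r ^ n • w := by
  induction n with
  | zero => simp
  | succ n ih => rw [pow_succ', ← mulVec_mulVec, ih, mulVec_smul, h, smul_smul, pow_succ]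

theorem pow_apply_pos_of_pos_imp {A B : Matrix K K ℝ} (hA : ∀ i j, 0 ≤ A i j)
    (hB : ∀ i j, 0 ≤ B i j) (h : ∀ i j, 0 < B i j → 0 < A i j) (n : ℕ) (i j : K)
    (hBn : 0 < (B ^ n) i j) : 0 < (A ^ n) i j := by
  induction n generalizing j with
  | zero => simpa [one_apply] using hBn
  | succ n ih =>
    rw [pow_succ, mul_apply] at hBn ⊢
    obtain ⟨t, -, ht⟩ := (sum_pos_iff_of_nonneg fun t _ =>
      mul_nonneg (pow_apply_nonneg hB n i t) (hB t j)).1 hBn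
    have hBnt : 0 < (B ^ n) i t := pos_of_mul_pos_left ht (hB t j)
    have hBt : 0 < B t j := pos_of_mul_pos_right ht (pow_apply_nonneg hB n i t)
    exact sum_pos' (fun s _ => mul_nonneg (pow_apply_nonneg hA n i s) (hA s j))
      ⟨t, mem_univ t, mul_pos (ih t hBnt) (h t j hBt)⟩

theorem IsIrreducible.of_pos_imp {A B : Matrix K K ℝ} (hB : B.IsIrreducible)
    (hA : ∀ i j, 0 ≤ A i j) (h : ∀ i j, 0 < B i j → 0 < A i j) : A.IsIrreducible := by
  rw [isIrreducible_iff_exists_pow_pos hA]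
  intro i j
  obtain ⟨n, hn, hBn⟩ := (isIrreducible_iff_exists_pow_pos hB.nonneg).1 hB i j
  exact ⟨n, hn, pow_apply_pos_of_pos_imp hA hB.nonneg h n i j hBn⟩

theorem IsIrreducible.exists_sum_pow_pos {A : Matrix K K ℝ} (hA : A.IsIrreducible) :
    ∃ M, ∀ i j, 0 < (∑ n ∈ range M, A ^ n) i j := by
  choose n _ hn using (isIrreducible_iff_exists_pow_pos hA.nonneg).1 hA
  obtain ⟨M, hM⟩ := Finite.exists_le fun p : K × K => n p.1 p.2
  refine ⟨M + 1, fun i j => ?_⟩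
  rw [sum_apply]
  exact (hn i j).trans_le (single_le_sum (fun m _ => pow_apply_nonneg hA.nonneg m i j)
    (mem_range.2 (Nat.lt_succ_of_le (hM (i, j)))))

theorem IsIrreducible.pos_of_mulVec_eq_smul {A : Matrix K K ℝ} (hA : A.IsIrreducible) {r : ℝ}
    {w : K → ℝ} (hw : 0 ≤ w) (hw0 : w ≠ 0) (h : A *ᵥ w = r • w) (k : K) : 0 < w k := by
  obtain ⟨j, hj⟩ := Function.ne_iff.1 hw0
  obtain ⟨n, -, hn⟩ := (isIrreducible_iff_exists_pow_pos hA.nonneg).1 hA k j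
  have : 0 < r ^ n * w k := by
    have := apply_mul_le_mulVec (pow_apply_nonneg hA.nonneg n) hw k j
    rw [pow_mulVec_eq_smul h] at this
    exact (mul_pos hn ((hw j).lt_of_ne' hj)).trans_le this
  exact (hw k).lt_of_ne fun h => by simp [← h] at this

theorem IsIrreducible.exists_pos_eigenvector [Nonempty K] {A : Matrix K K ℝ}
    (hA : A.IsIrreducible) : ∃ (r : ℝ) (w : K → ℝ), (∀ k, 0 < w k) ∧ A *ᵥ w = r • w := by
  obtain ⟨r, w, hw, hw0, hrw, hmax⟩ := exists_collatzWielandt_max hA.nonneg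
  suffices heig : A *ᵥ w = r • w from ⟨r, w, hA.pos_of_mulVec_eq_smul hw hw0 heig, heig⟩
  by_contra hne
  -- `P` is entrywise positive and commutes with `A`, so it turns the nonzero slack
  -- `A w - r w ≥ 0` into a strictly positive one for `P w`, and `r` could be increased.
  obtain ⟨M, hP⟩ := hA.exists_sum_pow_pos
  set P := ∑ n ∈ range M, A ^ n
  have hz : ∀ k, 0 < (P *ᵥ w) k := mulVec_pos hP hw hw0
  have hslack : ∀ k, 0 < (A *ᵥ (P *ᵥ w) - r • P *ᵥ w) k := by
    have hPA : A * P = P * A :=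
      (Commute.sum_right _ _ _ fun n _ => (Commute.refl A).pow_right n).eq
    rw [mulVec_mulVec, hPA, ← mulVec_mulVec, ← mulVec_smul, ← mulVec_sub]
    exact mulVec_pos hP (sub_nonneg.2 hrw) (sub_ne_zero.2 hne)
  obtain ⟨ε, hε, hεz⟩ := exists_pos_smul_le hz hslack
  have := hmax (r + ε) (P *ᵥ w) (fun k => (hz k).le) (ne_zero_of_forall_pos hz)
    (by rw [add_smul]; exact le_sub_iff_add_le'.1 hεz)
  linarith

theorem mem_spectrum_iff_exists_mulVec_eq_smul {𝕜 : Type*} [Field 𝕜] {M : Matrix K K 𝕜}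
    {μ : 𝕜} : μ ∈ spectrum 𝕜 M ↔ ∃ v ≠ 0, M *ᵥ v = μ • v := by
  rw [← spectrum_toLin', ← Module.End.hasEigenvalue_iff_mem_spectrum]
  constructor
  · intro h
    obtain ⟨v, hv, hv0⟩ := h.exists_hasEigenvector
    exact ⟨v, hv0, by simpa using Module.End.mem_eigenspace_iff.1 hv⟩
  · rintro ⟨v, hv0, hv⟩
    exact Module.End.hasEigenvalue_of_hasEigenvector
      ⟨Module.End.mem_eigenspace_iff.2 (by simpa using hv), hv0⟩

theorem ofReal_mem_spectrum_of_mulVec_eq_smul {A : Matrix K K ℝ} {r : ℝ} {w : K → ℝ}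
    (hw0 : w ≠ 0) (h : A *ᵥ w = r • w) : (r : ℂ) ∈ spectrum ℂ (A.map Complex.ofReal) := by
  refine mem_spectrum_iff_exists_mulVec_eq_smul.2 ⟨fun k => (w k : ℂ), fun h0 =>
    hw0 (funext fun k => Complex.ofReal_eq_zero.1 (congrFun h0 k)), funext fun k => ?_⟩
  have := (RingHom.map_mulVec Complex.ofRealHom A w k).symm
  rw [h] at this
  exact this.trans (by simp)

end Matrix

theorem specRad_eq_of_mulVec_eq_smul {K : Type*} [Fintype K] [DecidableEq K] [Nonempty K]
    {A : Matrix K K ℝ} (hA : ∀ i j, 0 ≤ A i j) {r : ℝ} {w : K → ℝ} (hw : ∀ k, 0 < w k)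
    (h : A *ᵥ w = r • w) : specRad A = r := by
  have hr : 0 ≤ r := by
    have := mulVec_nonneg hA (fun k => (hw k).le) (Classical.arbitrary K)
    rw [h] at this
    exact nonneg_of_mul_nonneg_left this (hw _)
  refine IsGreatest.csSup_eq ⟨⟨r, ofReal_mem_spectrum_of_mulVec_eq_smul
    (ne_zero_of_forall_pos hw) h, by simp [abs_of_nonneg hr]⟩, ?_⟩
  rintro _ ⟨μ, hμ, rfl⟩
  obtain ⟨v, hv0, hv⟩ := mem_spectrum_iff_exists_mulVec_eq_smul.1 hμ
  refine le_of_smul_le_mulVec_of_mulVec_le_smul hA (fun k => norm_nonneg (v k))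
    (norm_comp_ne_zero hv0) hw (fun k => ?_) h.le
  simpa [hv] using norm_map_ofReal_mulVec_le hA v k

section

variable {K : Type*} [Fintype K] [DecidableEq K] {β : K → ℝ} {Q : Matrix K K ℝ}

theorem Matrix.IsIrreducible.diagonal_mul_add_diagonal (hQ : Q.IsIrreducible)
    (hβ : ∀ k, 0 < β k) {c : K → ℝ} (hc : 0 ≤ c) :
    (diagonal β * Q + diagonal c).IsIrreducible := by
  have hentry : ∀ i j, β i * Q i j ≤ (diagonal β * Q + diagonal c) i j := fun i j => by
    rw [add_apply, diagonal_mul, le_add_iff_nonneg_right, diagonal_apply]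
    split_ifs
    exacts [hc i, le_rfl]
  exact hQ.of_pos_imp (fun i j => (mul_nonneg (hβ i).le (hQ.nonneg i j)).trans (hentry i j))
    fun i j hij => (mul_pos (hβ i) hij).trans_le (hentry i j)

theorem Matrix.IsIrreducible.exists_pos_eigenvector_diagonal_mul_sub_diagonal [Nonempty K]
    (hQ : Q.IsIrreducible) (hβ : ∀ k, 0 < β k) (d : K → ℝ) :
    ∃ (s : ℝ) (w : K → ℝ), (∀ k, 0 < w k) ∧ (diagonal β * Q - diagonal d) *ᵥ w = s • w := by
  obtain ⟨m, hm⟩ := Finite.exists_le d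
  obtain ⟨s, w, hw, hN⟩ := (hQ.diagonal_mul_add_diagonal hβ (c := fun k => m - d k)
    fun k => sub_nonneg.2 (hm k)).exists_pos_eigenvector
  refine ⟨s - m, w, hw, funext fun k => ?_⟩
  have := congrFun hN k
  simp only [add_mulVec, sub_mulVec, mulVec_diagonal, Pi.add_apply, Pi.sub_apply,
    Pi.smul_apply, smul_eq_mul] at this ⊢
  linarith

theorem norm_le_mulVec_norm_of_re_nonneg {d : K → ℝ} (hβ : ∀ k, 0 < β k) (hd : ∀ k, 0 < d k)
    (hQ : ∀ i j, 0 ≤ Q i j) {μ : ℂ} (hμ : 0 ≤ μ.re) {v : K → ℂ}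
    (hv : (diagonal β * Q - diagonal d).map Complex.ofReal *ᵥ v = μ • v) :
    (fun k => ‖v k‖) ≤ (diagonal (fun k => β k / d k) * Q) *ᵥ fun k => ‖v k‖ := by
  intro k
  have hk : (β k : ℂ) * (Q.map Complex.ofReal *ᵥ v) k = (μ + d k) * v k := by
    have := congrFun hv k
    change (Complex.ofRealHom.mapMatrix (diagonal β * Q - diagonal d) *ᵥ v) k = _ at this
    simp only [map_sub, map_mul, RingHom.mapMatrix_apply, diagonal_map (map_zero _), sub_mulVec,
      ← mulVec_mulVec, mulVec_diagonal, Pi.sub_apply, Pi.smul_apply, smul_eq_mul,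
      Complex.ofRealHom_eq_coe] at this
    linear_combination this
  have hdk : d k ≤ ‖μ + d k‖ :=
    calc d k ≤ (μ + d k).re := by simp [hμ]
      _ ≤ ‖μ + d k‖ := Complex.re_le_norm _
  rw [← mulVec_mulVec, mulVec_diagonal, div_mul_eq_mul_div, le_div_iff₀ (hd k)]
  calc ‖v k‖ * d k ≤ ‖v k‖ * ‖μ + d k‖ := mul_le_mul_of_nonneg_left hdk (norm_nonneg _)
    _ = β k * ‖(Q.map Complex.ofReal *ᵥ v) k‖ := by
      rw [mul_comm, ← norm_mul, ← hk, norm_mul, Complex.norm_real, Real.norm_of_nonneg (hβ k).le]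
    _ ≤ β k * (Q *ᵥ fun j => ‖v j‖) k :=
      mul_le_mul_of_nonneg_left (norm_map_ofReal_mulVec_le hQ v k) (hβ k).le

theorem mulVec_le_of_mulVec_eq_smul_of_nonpos {d : K → ℝ} (hd : ∀ k, 0 < d k) {s : ℝ}
    (hs : s ≤ 0) {w : K → ℝ} (hw : 0 ≤ w) (h : (diagonal β * Q - diagonal d) *ᵥ w = s • w) :
    (diagonal (fun k => β k / d k) * Q) *ᵥ w ≤ w := by
  intro k
  have := congrFun h k
  simp only [sub_mulVec, ← mulVec_mulVec, mulVec_diagonal, Pi.sub_apply, Pi.smul_apply,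
    smul_eq_mul] at this
  rw [← mulVec_mulVec, mulVec_diagonal, div_mul_eq_mul_div, div_le_iff₀ (hd k)]
  nlinarith [mul_nonpos_of_nonpos_of_nonneg hs (hw k)]

end

/-- Stability/instability of the disease-free equilibrium of the SIS coinfection
model with host classes, in terms of `R₀`. -/
theorem dfe_stability {K : Type*} [Fintype K] [DecidableEq K] [Nonempty K]
    (β r γ : K → ℝ) (hβ : ∀ k, 0 < β k) (hr : ∀ k, 0 < r k) (hγ : ∀ k, 0 < γ k)
    (Q : Matrix K K ℝ) (hQ : ∀ k s, 0 ≤ Q k s)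
    (hQirr : ∀ k s, ∃ n : ℕ, 1 ≤ n ∧ 0 < (Q ^ n) k s)
    (R : K → ℝ) (hR : ∀ k, R k = β k / (r k + γ k))
    (R₀ : ℝ) (hR₀ : R₀ = specRad (Matrix.diagonal R * Q))
    (J : Matrix K K ℝ)
    (hJ : J = Matrix.diagonal β * Q - Matrix.diagonal (fun k => r k + γ k)) :
    (R₀ < 1 → ∀ μ ∈ spectrum ℂ (J.map Complex.ofReal), μ.re < 0) ∧
    (1 < R₀ → ∃ μ ∈ spectrum ℂ (J.map Complex.ofReal), 0 < μ.re) := by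
  obtain rfl : R = fun k => β k / (r k + γ k) := funext hR
  subst hR₀ hJ
  have hd : ∀ k, 0 < r k + γ k := fun k => add_pos (hr k) (hγ k)
  replace hQirr : Q.IsIrreducible := (isIrreducible_iff_exists_pow_pos hQ).2 hQirr
  have hA : (diagonal (fun k => β k / (r k + γ k)) * Q).IsIrreducible := by
    simpa using hQirr.diagonal_mul_add_diagonal (fun k => div_pos (hβ k) (hd k)) le_rfl
  obtain ⟨ρ, u, hu, hAu⟩ := hA.exists_pos_eigenvector
  rw [specRad_eq_of_mulVec_eq_smul hA.nonneg hu hAu]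
  constructor
  · intro hρ μ hμ
    by_contra! hre
    obtain ⟨v, hv0, hv⟩ := mem_spectrum_iff_exists_mulVec_eq_smul.1 hμ
    have := le_of_smul_le_mulVec_of_mulVec_le_smul (c := 1) hA.nonneg
      (fun k => norm_nonneg (v k)) (norm_comp_ne_zero hv0) hu
      (by simpa using norm_le_mulVec_norm_of_re_nonneg hβ hd hQ hre hv) hAu.le
    linarith
  · intro hρ
    obtain ⟨s, w, hw, hJw⟩ :=
      hQirr.exists_pos_eigenvector_diagonal_mul_sub_diagonal hβ (fun k => r k + γ k)
    refine ⟨s, ofReal_mem_spectrum_of_mulVec_eq_smul (ne_zero_of_forall_pos hw) hJw, ?_⟩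
    by_contra! hs
    have := le_of_smul_le_mulVec_of_mulVec_le_smul (ρ := 1) hA.nonneg (fun k => (hu k).le)
      (ne_zero_of_forall_pos hu) hw hAu.ge
      (by simpa using mulVec_le_of_mulVec_eq_smul_of_nonpos hd hs (fun k => (hw k).le) hJw)
    linarith
end

section
/- Suppose T = (T_k)_{k∈K} with T_k ∈ (0,1) satisfies T_k = R_k (1−T_k) Θ_k for all k, where Θ = Q T. Then the Metzler matrix J = −diag(β_k Θ_k + r_k + γ_k) + diag(β_k (1−T_k))·Q satisfies J T = −diag((r_k+γ_k) R_k Θ_k)·T, which has all entries strictly negative, and consequently every eigenvalue of J has strictly negative real part (linear stability of the endemic equilibrium). -/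
/-!
The fixed-point equation turns `J T` into `-diag((r+γ) R Θ) T < 0`, and a Metzler matrix
with a positive vector `T` such that `J T < 0` is stable. Indeed, for an eigenpair `(μ, v)`
of `J`, the off-diagonal part of row `k` of `J v = μ v` gives `Re μ ‖v k‖ ≤ (J ‖v‖) k`.
At an index `k` where `‖v s‖ / T s` attains its maximum `m`, the vector `‖v‖` lies below
`m T` with equality at `k`, so the Metzler property gives `Re μ · m T k ≤ m (J T) k < 0`.
-/

open Matrix

namespace Matrix

variable {n : Type*}

def IsMetzler (A : Matrix n n ℝ) : Prop :=
  ∀ i j, i ≠ j → 0 ≤ A i j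

lemma isMetzler_diagonal [DecidableEq n] (d : n → ℝ) : (diagonal d).IsMetzler :=
  fun _ _ hij => (diagonal_apply_ne d hij).ge

lemma IsMetzler.add {A B : Matrix n n ℝ} (hA : A.IsMetzler) (hB : B.IsMetzler) :
    (A + B).IsMetzler :=
  fun i j hij => add_nonneg (hA i j hij) (hB i j hij)

lemma isMetzler_diagonal_mul_of_nonneg [Fintype n] [DecidableEq n] {c : n → ℝ} (hc : 0 ≤ c)
    {A : Matrix n n ℝ} (hA : ∀ i j, 0 ≤ A i j) : (diagonal c * A).IsMetzler :=
  fun i j _ => by rw [diagonal_mul]; exact mul_nonneg (hc i) (hA i j)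

lemma exists_mulVec_eq_smul_of_mem_spectrum [Fintype n] [DecidableEq n] {A : Matrix n n ℂ}
    {μ : ℂ} (hμ : μ ∈ spectrum ℂ A) : ∃ v ≠ 0, A *ᵥ v = μ • v := by
  rw [← spectrum_toLin', ← Module.End.hasEigenvalue_iff_mem_spectrum] at hμ
  obtain ⟨v, hv⟩ := hμ.exists_hasEigenvector
  exact ⟨v, hv.2, by simpa using hv.apply_eq_smul⟩

lemma IsMetzler.mulVec_apply_le [Fintype n] {A : Matrix n n ℝ} (hA : A.IsMetzler)
    {w z : n → ℝ} (hwz : w ≤ z) {k : n} (hk : w k = z k) : (A *ᵥ w) k ≤ (A *ᵥ z) k := by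
  refine Finset.sum_le_sum fun s _ => ?_
  rcases eq_or_ne k s with rfl | hks
  · rw [hk]
  · exact mul_le_mul_of_nonneg_left (hwz s) (hA k s hks)

lemma IsMetzler.re_mul_norm_le [Fintype n] [DecidableEq n] {A : Matrix n n ℝ} (hA : A.IsMetzler)
    {μ : ℂ} {v : n → ℂ} (hv : A.map Complex.ofReal *ᵥ v = μ • v) (k : n) :
    μ.re * ‖v k‖ ≤ (A *ᵥ fun s => ‖v s‖) k := by
  have hrow : (μ - A k k) * v k = ∑ s ∈ Finset.univ.erase k, (A k s : ℂ) * v s := by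
    have hk := congrFun hv k
    simp only [mulVec, dotProduct, map_apply, Pi.smul_apply, smul_eq_mul] at hk
    rw [← Finset.add_sum_erase _ _ (Finset.mem_univ k)] at hk
    linear_combination -hk
  have hoff : ‖(μ - A k k) * v k‖ ≤ ∑ s ∈ Finset.univ.erase k, A k s * ‖v s‖ := by
    rw [hrow]
    refine (norm_sum_le _ _).trans (Finset.sum_le_sum fun s hs => ?_)
    rw [norm_mul, Complex.norm_real, Real.norm_of_nonneg (hA k s (Finset.ne_of_mem_erase hs).symm)]
  have hre : (μ.re - A k k) * ‖v k‖ ≤ ‖(μ - A k k) * v k‖ := by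
    rw [norm_mul]
    gcongr
    simpa using Complex.re_le_norm (μ - A k k)
  rw [mulVec, dotProduct, ← Finset.add_sum_erase _ _ (Finset.mem_univ k)]
  linarith

theorem IsMetzler.re_lt_zero_of_mulVec_neg [Fintype n] [DecidableEq n] {A : Matrix n n ℝ}
    (hA : A.IsMetzler) {T : n → ℝ} (hT : ∀ k, 0 < T k) (hAT : ∀ k, (A *ᵥ T) k < 0) :
    ∀ μ ∈ spectrum ℂ (A.map Complex.ofReal), μ.re < 0 := by
  intro μ hμ
  obtain ⟨v, hv0, hv⟩ := exists_mulVec_eq_smul_of_mem_spectrum hμ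
  obtain ⟨j, hj⟩ := Function.ne_iff.mp hv0
  obtain ⟨k, -, hk⟩ := Finset.exists_max_image Finset.univ (fun s => ‖v s‖ / T s)
    ⟨j, Finset.mem_univ j⟩
  set m := ‖v k‖ / T k
  have hm : 0 < m := (div_pos (norm_pos_iff.mpr hj) (hT j)).trans_le (hk j (Finset.mem_univ j))
  have hle : (fun s => ‖v s‖) ≤ m • T := fun s =>
    (div_le_iff₀ (hT s)).mp (hk s (Finset.mem_univ s))
  have hvk : ‖v k‖ = (m • T) k := (div_mul_cancel₀ _ (hT k).ne').symm
  have key : μ.re * (m * T k) ≤ m * (A *ᵥ T) k := by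
    simpa [hvk, mulVec_smul] using (hA.re_mul_norm_le hv k).trans (hA.mulVec_apply_le hle hvk)
  exact neg_of_mul_neg_left (key.trans_lt (mul_neg_of_pos_of_neg hm (hAT k)))
    (mul_pos hm (hT k)).le

end Matrix

theorem endemic_linear_stability_general {K : Type*} [Fintype K] [DecidableEq K]
    (β r γ : K → ℝ) (hβ : ∀ k, 0 < β k) (hr : ∀ k, 0 < r k) (hγ : ∀ k, 0 < γ k)
    (Q : Matrix K K ℝ) (hQ : ∀ k s, 0 ≤ Q k s)
    (R : K → ℝ) (hR : ∀ k, R k = β k / (r k + γ k))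
    (T Θ : K → ℝ) (hT : ∀ k, T k ∈ Set.Ioo (0:ℝ) 1)
    (hΘ : Θ = Q.mulVec T)
    (hfix : ∀ k, T k = R k * (1 - T k) * Θ k)
    (J : Matrix K K ℝ)
    (hJ : J = -Matrix.diagonal (fun k => β k * Θ k + r k + γ k) +
      Matrix.diagonal (fun k => β k * (1 - T k)) * Q) :
    (J.mulVec T = fun k => -((r k + γ k) * R k * Θ k * T k)) ∧
    (∀ k, J.mulVec T k < 0) ∧
    (∀ μ ∈ spectrum ℂ (J.map Complex.ofReal), μ.re < 0) := by
  have hrγ k : 0 < r k + γ k := add_pos (hr k) (hγ k)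
  have hRpos k : 0 < R k := hR k ▸ div_pos (hβ k) (hrγ k)
  have hΘpos k : 0 < Θ k := by
    have := (hT k).1
    rw [hfix k] at this
    exact pos_of_mul_pos_right this (mul_pos (hRpos k) (sub_pos.mpr (hT k).2)).le
  have hJT : J *ᵥ T = fun k => -((r k + γ k) * R k * Θ k * T k) := by
    ext k
    have hβR : β k = (r k + γ k) * R k := by rw [hR k, mul_div_cancel₀ _ (hrγ k).ne']
    simp only [hJ, add_mulVec, neg_mulVec, ← mulVec_mulVec, ← hΘ, Pi.add_apply, Pi.neg_apply,
      mulVec_diagonal, hβR]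
    linear_combination (-(r k + γ k)) * hfix k
  have hJT_neg k : (J *ᵥ T) k < 0 := by
    rw [hJT, neg_lt_zero]
    exact mul_pos (mul_pos (mul_pos (hrγ k) (hRpos k)) (hΘpos k)) (hT k).1
  have hMetzler : J.IsMetzler := by
    rw [hJ, diagonal_neg]
    exact (isMetzler_diagonal _).add <| isMetzler_diagonal_mul_of_nonneg
      (fun k => mul_nonneg (hβ k).le (sub_nonneg.mpr (hT k).2.le)) hQ
  exact ⟨hJT, hJT_neg, hMetzler.re_lt_zero_of_mulVec_neg (fun k => (hT k).1) hJT_neg⟩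

/-- Linear stability of the endemic equilibrium: the Metzler matrix
`J = -diag(β_k Θ_k + r_k + γ_k) + diag(β_k (1-T_k)) Q` satisfies
`J T = -diag((r_k+γ_k) R_k Θ_k) T < 0`, and all its eigenvalues have
strictly negative real part. -/
theorem endemic_linear_stability {K : Type*} [Fintype K] [DecidableEq K] [Nonempty K]
    (β r γ : K → ℝ) (hβ : ∀ k, 0 < β k) (hr : ∀ k, 0 < r k) (hγ : ∀ k, 0 < γ k)
    (Q : Matrix K K ℝ) (hQ : ∀ k s, 0 ≤ Q k s)
    (hQirr : ∀ k s, ∃ n : ℕ, 1 ≤ n ∧ 0 < (Q ^ n) k s)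
    (R : K → ℝ) (hR : ∀ k, R k = β k / (r k + γ k))
    (T Θ : K → ℝ) (hT : ∀ k, T k ∈ Set.Ioo (0:ℝ) 1)
    (hΘ : Θ = Q.mulVec T)
    (hfix : ∀ k, T k = R k * (1 - T k) * Θ k)
    (J : Matrix K K ℝ)
    (hJ : J = -Matrix.diagonal (fun k => β k * Θ k + r k + γ k) +
      Matrix.diagonal (fun k => β k * (1 - T k)) * Q) :
    (J.mulVec T = fun k => -((r k + γ k) * R k * Θ k * T k)) ∧
    (∀ k, J.mulVec T k < 0) ∧
    (∀ μ ∈ spectrum ℂ (J.map Complex.ofReal), μ.re < 0) :=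
  endemic_linear_stability_general β r γ hβ hr hγ Q hQ R hR T Θ hT hΘ hfix J hJ
end

section
/- Suppose (S_k, I_k, D_k)_{k∈K} with S_k + I_k + D_k = 1 satisfies the steady-state equations of the SIS coinfection model with host classes: 0 = r_k(1−S_k) − β_k S_k Θ_k + γ_k(I_k+D_k), 0 = β_k S_k Θ_k − σ_k β_k I_k Θ_k − (γ_k+r_k) I_k, and 0 = σ_k β_k I_k Θ_k − (r_k+γ_k) D_k, where T_k = I_k + D_k, Θ = Q T, and Θ_k > 0 for all k. Then for every k ∈ K: S_k = 1/(1+R_k Θ_k), T_k = R_k Θ_k/(1+R_k Θ_k), I_k = T_k/(1+σ_k R_k Θ_k), and D_k = σ_k R_k Θ_k T_k/(1+σ_k R_k Θ_k). -/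
/-!
Once the force of infection `Θ k` is treated as known, each host class decouples into linear
equations. With `S = 1 - T`, the equation for `S` is the balance `(r + γ) T = β (1 - T) Θ`, so
`T (1 + R Θ) = R Θ`; the equation for `D` alone gives `D = σ R Θ I`, which splits `T = I + D` in
the ratio `1 : σ R Θ`.
-/

namespace SISCoinfection

variable {β r γ σ R θ S I D : ℝ}

theorem infected_mul_one_add_eq (hrγ : r + γ ≠ 0) (hR : R = β / (r + γ))
    (hsum : S + I + D = 1) (heq : r * (1 - S) - β * S * θ + γ * (I + D) = 0) :
    (I + D) * (1 + R * θ) = R * θ := by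
  subst hR
  field_simp
  linear_combination heq + (r + β * θ) * hsum

theorem coinfected_eq (hrγ : r + γ ≠ 0) (hR : R = β / (r + γ))
    (heq : σ * β * I * θ - (r + γ) * D = 0) :
    D = σ * R * θ * I := by
  subst hR
  field_simp
  linear_combination -heq

theorem steady_state_eq (hrγ : r + γ ≠ 0) (hR : R = β / (r + γ))
    (hden : 1 + R * θ ≠ 0) (hden' : 1 + σ * R * θ ≠ 0) (hsum : S + I + D = 1)
    (heq1 : r * (1 - S) - β * S * θ + γ * (I + D) = 0)
    (heq3 : σ * β * I * θ - (r + γ) * D = 0) :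
    S = 1 / (1 + R * θ) ∧ I + D = R * θ / (1 + R * θ) ∧
      I = (I + D) / (1 + σ * R * θ) ∧ D = σ * R * θ * (I + D) / (1 + σ * R * θ) := by
  have hT : I + D = R * θ / (1 + R * θ) :=
    eq_div_of_mul_eq hden (infected_mul_one_add_eq hrγ hR hsum heq1)
  have hD := coinfected_eq hrγ hR heq3
  refine ⟨?_, hT, ?_, ?_⟩
  · rw [show S = 1 - (I + D) by linarith, hT]
    field_simp
    ring
  · exact eq_div_of_mul_eq hden' (by rw [hD]; ring)
  · rw [eq_div_iff hden', hD]
    ring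

end SISCoinfection

theorem endemic_steady_state_formulas_general {K : Type*}
    (β r γ σ : K → ℝ) (hβ : ∀ k, 0 < β k) (hr : ∀ k, 0 < r k)
    (hγ : ∀ k, 0 < γ k) (hσ : ∀ k, 0 < σ k)
    (R : K → ℝ) (hR : ∀ k, R k = β k / (r k + γ k))
    (S I D T Θ : K → ℝ)
    (hsum : ∀ k, S k + I k + D k = 1)
    (hT : ∀ k, T k = I k + D k)
    (hΘpos : ∀ k, 0 < Θ k)
    (heq1 : ∀ k, r k * (1 - S k) - β k * S k * Θ k + γ k * (I k + D k) = 0)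
    (heq3 : ∀ k, σ k * β k * I k * Θ k - (r k + γ k) * D k = 0) :
    ∀ k, S k = 1 / (1 + R k * Θ k) ∧
      T k = R k * Θ k / (1 + R k * Θ k) ∧
      I k = T k / (1 + σ k * R k * Θ k) ∧
      D k = σ k * R k * Θ k * T k / (1 + σ k * R k * Θ k) := by
  intro k
  have hrγ : 0 < r k + γ k := add_pos (hr k) (hγ k)
  have hRθ : 0 < R k * Θ k := mul_pos (hR k ▸ div_pos (hβ k) hrγ) (hΘpos k)
  have hσRθ : 0 < σ k * R k * Θ k := by rw [mul_assoc]; exact mul_pos (hσ k) hRθ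
  rw [hT k]
  exact SISCoinfection.steady_state_eq hrγ.ne' (hR k) (by linarith) (by linarith) (hsum k)
    (heq1 k) (heq3 k)

/-- Explicit formulas for the endemic steady state of the SIS coinfection model
with host classes. -/
theorem endemic_steady_state_formulas {K : Type*} [Fintype K] [Nonempty K]
    (β r γ σ : K → ℝ) (hβ : ∀ k, 0 < β k) (hr : ∀ k, 0 < r k)
    (hγ : ∀ k, 0 < γ k) (hσ : ∀ k, 0 < σ k)
    (Q : Matrix K K ℝ) (hQ : ∀ k s, 0 ≤ Q k s)
    (R : K → ℝ) (hR : ∀ k, R k = β k / (r k + γ k))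
    (S I D T Θ : K → ℝ)
    (hsum : ∀ k, S k + I k + D k = 1)
    (hT : ∀ k, T k = I k + D k)
    (hΘ : Θ = Q.mulVec T) (hΘpos : ∀ k, 0 < Θ k)
    (heq1 : ∀ k, r k * (1 - S k) - β k * S k * Θ k + γ k * (I k + D k) = 0)
    (heq2 : ∀ k, β k * S k * Θ k - σ k * β k * I k * Θ k - (γ k + r k) * I k = 0)
    (heq3 : ∀ k, σ k * β k * I k * Θ k - (r k + γ k) * D k = 0) :
    ∀ k, S k = 1 / (1 + R k * Θ k) ∧
      T k = R k * Θ k / (1 + R k * Θ k) ∧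
      I k = T k / (1 + σ k * R k * Θ k) ∧
      D k = σ k * R k * Θ k * T k / (1 + σ k * R k * Θ k) :=
  endemic_steady_state_formulas_general β r γ σ hβ hr hγ hσ R hR S I D T Θ hsum hT hΘpos heq1 heq3
end

section
/- Assume R_0 > 1 and let ζ = (ζ_k)_{k∈K} be a probability vector with strictly positive entries satisfying ζ^T·diag(R_k)·Q = R_0 ζ^T. Suppose T = (T_k)_{k∈K} with T_k ∈ (0,1) satisfies T_k = R_k(1−T_k)Θ_k for all k, where Θ = Q T. Then Σ_{k∈K} ζ_k T_k ≤ 1 − 1/R_0, with equality if and only if R_k = R_0 for every k ∈ K. -/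
open Matrix

/-!
Write `f x = x / (1 - x)`. The equilibrium equations say `f (T k) = R k * Θ k`, and pairing them
with the left eigenvector `ζ` gives `∑ ζ k * f (T k) = R₀ * S` for the mean prevalence
`S = ∑ ζ k * T k`. Since `f` is strictly convex, Jensen's inequality gives `f S ≤ R₀ * S`, that is
`S ≤ 1 - 1 / R₀`, with equality only if every `T k` equals `S`, which forces `R k = R₀`.
Conversely, if every `R k = R₀`, comparing the equations at a largest and a smallest `T k` shows
that `T` is constant, equal to `1 - 1 / R₀`.
-/

open Finset

lemma strictConvexOn_div_one_sub : StrictConvexOn ℝ (Set.Iio 1) fun x : ℝ => x / (1 - x) := by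
  refine ⟨convex_Iio 1, fun x (hx : x < 1) y (hy : y < 1) hxy a b ha hb hab => ?_⟩
  have hu : 0 < 1 - x := sub_pos.2 hx
  have hv : 0 < 1 - y := sub_pos.2 hy
  have hw : 1 - (a * x + b * y) = a * (1 - x) + b * (1 - y) := by
    linear_combination -hab
  have hw_pos : 0 < 1 - (a * x + b * y) := by rw [hw]; positivity
  have hgap : a * (x / (1 - x)) + b * (y / (1 - y)) - (a * x + b * y) / (1 - (a * x + b * y))
      = a * b * (x - y) ^ 2 / ((1 - x) * (1 - y) * (1 - (a * x + b * y))) := by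
    rw [show b = 1 - a by linarith] at hw_pos ⊢
    field_simp
    ring
  have hgap_pos : 0 < a * b * (x - y) ^ 2 / ((1 - x) * (1 - y) * (1 - (a * x + b * y))) := by
    have hxy' := sub_ne_zero.2 hxy
    positivity
  simp only [smul_eq_mul]
  linarith

lemma div_one_sub_le_mul_iff {x r : ℝ} (hx : x ∈ Set.Ioo 0 1) (hr : 0 < r) :
    x / (1 - x) ≤ r * x ↔ x ≤ 1 - 1 / r := by
  rw [div_le_iff₀ (sub_pos.2 hx.2), le_sub_comm, div_le_iff₀' hr, mul_right_comm,
    le_mul_iff_one_le_left hx.1]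

lemma mul_le_div_one_sub_iff {x r : ℝ} (hx : x ∈ Set.Ioo 0 1) (hr : 0 < r) :
    r * x ≤ x / (1 - x) ↔ 1 - 1 / r ≤ x := by
  rw [le_div_iff₀ (sub_pos.2 hx.2), sub_le_comm, le_div_iff₀' hr, mul_right_comm,
    mul_le_iff_le_one_left hx.1]

section RowStochastic

variable {R n : Type*} [Fintype n] [DecidableEq n] [Semiring R] [PartialOrder R]
  [IsOrderedRing R] {M : Matrix n n R} {x : n → R} {c : R}

lemma mulVec_le_of_mem_rowStochastic (hM : M ∈ rowStochastic R n) (hx : ∀ j, x j ≤ c) (i : n) :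
    (M *ᵥ x) i ≤ c :=
  calc (M *ᵥ x) i = ∑ j, M i j * x j := rfl
    _ ≤ ∑ j, M i j * c := sum_le_sum fun j _ => mul_le_mul_of_nonneg_left (hx j) (hM.1 i j)
    _ = c := by rw [← sum_mul, sum_row_of_mem_rowStochastic hM, one_mul]

lemma le_mulVec_of_mem_rowStochastic (hM : M ∈ rowStochastic R n) (hx : ∀ j, c ≤ x j) (i : n) :
    c ≤ (M *ᵥ x) i :=
  calc c = ∑ j, M i j * c := by rw [← sum_mul, sum_row_of_mem_rowStochastic hM, one_mul]
    _ ≤ ∑ j, M i j * x j := sum_le_sum fun j _ => mul_le_mul_of_nonneg_left (hx j) (hM.1 i j)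
    _ = (M *ᵥ x) i := rfl

end RowStochastic

lemma eq_one_sub_one_div_of_div_one_sub_eq {K : Type*} [Fintype K] [DecidableEq K]
    {Q : Matrix K K ℝ} (hQ : Q ∈ rowStochastic ℝ K) {r : ℝ} (hr : 0 < r) {T : K → ℝ}
    (hT : ∀ k, T k ∈ Set.Ioo 0 1) (hodds : ∀ k, T k / (1 - T k) = r * (Q *ᵥ T) k) (k : K) :
    T k = 1 - 1 / r := by
  obtain ⟨m, -, hm⟩ := exists_max_image univ T ⟨k, mem_univ k⟩
  obtain ⟨m', -, hm'⟩ := exists_min_image univ T ⟨k, mem_univ k⟩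
  have hmax : T m ≤ 1 - 1 / r := (div_one_sub_le_mul_iff (hT m) hr).1 <| by
    rw [hodds m]
    exact mul_le_mul_of_nonneg_left
      (mulVec_le_of_mem_rowStochastic hQ (fun j => hm j (mem_univ j)) m) hr.le
  have hmin : 1 - 1 / r ≤ T m' := (mul_le_div_one_sub_iff (hT m') hr).1 <| by
    rw [hodds m']
    exact mul_le_mul_of_nonneg_left
      (le_mulVec_of_mem_rowStochastic hQ (fun j => hm' j (mem_univ j)) m') hr.le
  exact le_antisymm ((hm k (mem_univ k)).trans hmax) (hmin.trans (hm' k (mem_univ k)))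

lemma sum_mul_diagonal_mulVec_of_vecMul_eq_smul {K α : Type*} [Fintype K] [DecidableEq K]
    [CommSemiring α] {D ζ : K → α} {Q : Matrix K K α} {c : α} (hζ : ζ ᵥ* (diagonal D * Q) = c • ζ)
    (x : K → α) : ∑ k, ζ k * (D k * (Q *ᵥ x) k) = c * ∑ k, ζ k * x k :=
  calc ∑ k, ζ k * (D k * (Q *ᵥ x) k) = ζ ⬝ᵥ (diagonal D * Q) *ᵥ x := by
        simp [dotProduct, ← mulVec_mulVec, mulVec_diagonal]
    _ = c * ∑ k, ζ k * x k := by rw [dotProduct_mulVec, hζ, smul_dotProduct, smul_eq_mul]; rfl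

theorem heterogeneity_lowers_prevalence_general {K : Type*} [Fintype K] [DecidableEq K]
    (R : K → ℝ)
    (Q : Matrix K K ℝ) (hQ : ∀ k s, 0 ≤ Q k s)
    (hQrow : ∀ k, ∑ s, Q k s = 1)
    (R₀ : ℝ) (hR₀gt : 1 < R₀)
    (ζ : K → ℝ) (hζpos : ∀ k, 0 < ζ k) (hζsum : ∑ k, ζ k = 1)
    (hζeig : Matrix.vecMul ζ (Matrix.diagonal R * Q) = R₀ • ζ)
    (T Θ : K → ℝ) (hT : ∀ k, T k ∈ Set.Ioo (0:ℝ) 1)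
    (hΘ : Θ = Q.mulVec T)
    (hfix : ∀ k, T k = R k * (1 - T k) * Θ k) :
    (∑ k, ζ k * T k) ≤ 1 - 1 / R₀ ∧
    ((∑ k, ζ k * T k) = 1 - 1 / R₀ ↔ ∀ k, R k = R₀) := by
  subst hΘ
  have hQ' : Q ∈ rowStochastic ℝ K := mem_rowStochastic_iff_sum.2 ⟨hQ, hQrow⟩
  have hR₀pos : 0 < R₀ := one_pos.trans hR₀gt
  set S := ∑ k, ζ k * T k
  have hS : S ∈ Set.Ioo 0 1 :=
    (convex_Ioo 0 1).sum_mem (fun k _ => (hζpos k).le) hζsum fun k _ => hT k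
  have hodds : ∀ k, T k / (1 - T k) = R k * (Q *ᵥ T) k := fun k => by
    rw [div_eq_iff (sub_pos.2 (hT k).2).ne']
    linear_combination hfix k
  have hpair : ∑ k, ζ k * (T k / (1 - T k)) = R₀ * S := by
    simpa only [hodds] using sum_mul_diagonal_mulVec_of_vecMul_eq_smul hζeig T
  have hjensen : S / (1 - S) ≤ R₀ * S := hpair ▸
    strictConvexOn_div_one_sub.convexOn.map_sum_le (fun k _ => (hζpos k).le) hζsum
      fun k _ => (hT k).2
  refine ⟨(div_one_sub_le_mul_iff hS hR₀pos).1 hjensen, fun heq => ?_, fun hRk => ?_⟩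
  · have hequal : S / (1 - S) = R₀ * S :=
      hjensen.antisymm ((mul_le_div_one_sub_iff hS hR₀pos).2 heq.ge)
    have hflat : ∀ k, T k = S := fun k =>
      (strictConvexOn_div_one_sub.map_sum_eq_iff (fun k _ => hζpos k) hζsum
        fun k _ => (hT k).2).1 (by simpa only [smul_eq_mul, hpair] using hequal) k (mem_univ k)
    intro k
    have hΘk : (Q *ᵥ T) k = S := le_antisymm
      (mulVec_le_of_mem_rowStochastic hQ' (fun j => (hflat j).le) k)
      (le_mulVec_of_mem_rowStochastic hQ' (fun j => (hflat j).ge) k)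
    have hRk : R k * S = R₀ * S :=
      calc R k * S = T k / (1 - T k) := by rw [hodds, hΘk]
        _ = R₀ * S := by rw [hflat k, hequal]
    exact mul_right_cancel₀ hS.1.ne' hRk
  · have hflat := eq_one_sub_one_div_of_div_one_sub_eq hQ' hR₀pos hT fun k => hRk k ▸ hodds k
    simp only [S, hflat, ← sum_mul, hζsum, one_mul]

/-- Effect of heterogeneity on the prevalence: at the endemic equilibrium of the
structured SIS model, the ζ-weighted mean prevalence is at most `1 - 1/R₀`, with
equality iff all `R_k` equal `R₀`. -/
theorem heterogeneity_lowers_prevalence {K : Type*} [Fintype K] [DecidableEq K] [Nonempty K]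
    (R : K → ℝ) (hR : ∀ k, 0 < R k)
    (Q : Matrix K K ℝ) (hQ : ∀ k s, 0 ≤ Q k s)
    (hQirr : ∀ k s, ∃ n : ℕ, 1 ≤ n ∧ 0 < (Q ^ n) k s)
    (hQrow : ∀ k, ∑ s, Q k s = 1)
    (R₀ : ℝ) (hR₀ : R₀ = specRad (Matrix.diagonal R * Q)) (hR₀gt : 1 < R₀)
    (ζ : K → ℝ) (hζpos : ∀ k, 0 < ζ k) (hζsum : ∑ k, ζ k = 1)
    (hζeig : Matrix.vecMul ζ (Matrix.diagonal R * Q) = R₀ • ζ)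
    (T Θ : K → ℝ) (hT : ∀ k, T k ∈ Set.Ioo (0:ℝ) 1)
    (hΘ : Θ = Q.mulVec T)
    (hfix : ∀ k, T k = R k * (1 - T k) * Θ k) :
    (∑ k, ζ k * T k) ≤ 1 - 1 / R₀ ∧
    ((∑ k, ζ k * T k) = 1 - 1 / R₀ ↔ ∀ k, R k = R₀) :=
  heterogeneity_lowers_prevalence_general R Q hQ hQrow R₀ hR₀gt ζ hζpos hζsum hζeig T Θ hT hΘ hfix
end

section
/- Let R_0 = Σ_{k∈K} q_k R_k > 1, let Θ^* ∈ (0,1) satisfy Σ_{k∈K} q_k R_k/(1+Θ^* R_k) = 1, and set Θ^0 = 1 − 1/R_0. Then Θ^* ≤ Θ^0, and Θ^* = Θ^0 holds if and only if R_k = R_0 for every k with q_k > 0. In particular, if there exists k ∈ K with q_k > 0 and R_k ≠ R_0, then Θ^* < Θ^0: heterogeneity in the R_k strictly lowers the endemic prevalence at fixed R_0. -/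
/-!
`F(Θ) = ∑ q_k R_k / (1 + Θ R_k)` is strictly decreasing in `Θ ≥ 0` and `Θ*` solves `F(Θ*) = 1`,
so everything is decided by the sign of `F(Θ⁰) - 1`. Now `F(Θ⁰) = ∑ q_k f(R_k)` for the strictly
concave `f(x) = x / (1 + Θ⁰ x)`, and `f(R₀) = 1` exactly because `Θ⁰ = 1 - 1/R₀`. Jensen's
inequality gives `F(Θ⁰) ≤ f(∑ q_k R_k) = 1`, with equality iff `R_k` is constant on the support
of `q`.
-/

open Finset Set

theorem strictConcaveOn_div_one_add_mul {c : ℝ} (hc : 0 < c) :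
    StrictConcaveOn ℝ (Ici 0) fun x ↦ x / (1 + c * x) := by
  have slope : ∀ {s t : ℝ}, 0 ≤ s → s < t →
      (t / (1 + c * t) - s / (1 + c * s)) / (t - s) = 1 / ((1 + c * s) * (1 + c * t)) := by
    intro s t hs hst
    have ht : 0 ≤ t := hs.trans hst.le
    have : t - s ≠ 0 := sub_ne_zero.2 hst.ne'
    field_simp
    ring
  refine strictConcaveOn_of_slope_strict_anti_adjacent (convex_Ici 0)
    fun {x y z} (hx : 0 ≤ x) _ hxy hyz ↦ ?_
  have hy : 0 ≤ y := hx.trans hxy.le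
  have hxz : x < z := hxy.trans hyz
  rw [slope hy hyz, slope hx hxy, mul_comm (1 + c * x)]
  gcongr

theorem one_sub_one_div_pos {R₀ : ℝ} (h : 1 < R₀) : 0 < 1 - 1 / R₀ :=
  sub_pos.2 ((div_lt_one (zero_lt_one.trans h)).2 h)

theorem div_one_add_one_sub_one_div_mul_self {R₀ : ℝ} (h : R₀ ≠ 0) :
    R₀ / (1 + (1 - 1 / R₀) * R₀) = 1 := by
  rw [one_sub_mul, one_div_mul_cancel h, add_sub_cancel, div_self h]

section FixedPointMap

variable {K : Type*} [Fintype K]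

noncomputable def fixedPointMap (q R : K → ℝ) (Θ : ℝ) : ℝ :=
  ∑ k, q k * R k / (1 + Θ * R k)

theorem strictAntiOn_fixedPointMap {q R : K → ℝ} (hq : ∀ k, 0 ≤ q k) (hR : ∀ k, 0 ≤ R k)
    (hpos : 0 < ∑ k, q k * R k) : StrictAntiOn (fixedPointMap q R) (Ici 0) := by
  intro a (ha : 0 ≤ a) b _ hab
  obtain ⟨j, -, hj⟩ := exists_lt_of_sum_lt (f := fun _ ↦ (0 : ℝ)) (by simpa using hpos)
  have hRj : 0 < R j := pos_of_mul_pos_right hj (hq j)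
  refine sum_lt_sum (fun k _ ↦ ?_) ⟨j, mem_univ j, ?_⟩
  · have hqR := mul_nonneg (hq k) (hR k)
    have hRk := hR k
    gcongr
  · gcongr

theorem fixedPointMap_le_one {q R : K → ℝ} {R₀ : ℝ} (hq : ∀ k, 0 ≤ q k) (hqsum : ∑ k, q k = 1)
    (hR : ∀ k, 0 ≤ R k) (hR₀ : R₀ = ∑ k, q k * R k) (hR₀gt : 1 < R₀) :
    fixedPointMap q R (1 - 1 / R₀) ≤ 1 := by
  have hf := strictConcaveOn_div_one_add_mul (one_sub_one_div_pos hR₀gt)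
  have := hf.concaveOn.le_map_sum (t := univ) (fun k _ ↦ hq k) hqsum fun k _ ↦ hR k
  simp only [smul_eq_mul, ← hR₀,
    div_one_add_one_sub_one_div_mul_self (by positivity : R₀ ≠ 0)] at this
  simpa only [fixedPointMap, mul_div_assoc]

theorem fixedPointMap_eq_one_iff {q R : K → ℝ} {R₀ : ℝ} (hq : ∀ k, 0 ≤ q k) (hqsum : ∑ k, q k = 1)
    (hR : ∀ k, 0 ≤ R k) (hR₀ : R₀ = ∑ k, q k * R k) (hR₀gt : 1 < R₀) :
    fixedPointMap q R (1 - 1 / R₀) = 1 ↔ ∀ k, 0 < q k → R k = R₀ := by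
  have hf := strictConcaveOn_div_one_add_mul (one_sub_one_div_pos hR₀gt)
  have := hf.map_sum_eq_iff' (t := univ) (fun k _ ↦ hq k) hqsum fun k _ ↦ hR k
  simp only [smul_eq_mul, ← hR₀,
    div_one_add_one_sub_one_div_mul_self (by positivity : R₀ ≠ 0)] at this
  rw [fixedPointMap, eq_comm]
  simp only [mul_div_assoc, this]
  simp [(hq _).lt_iff_ne']

end FixedPointMap

theorem heterogeneity_strictly_lowers_prevalence_general {K : Type*} [Fintype K]
    (q R : K → ℝ) (hq : ∀ k, 0 ≤ q k) (hqsum : ∑ k, q k = 1) (hR : ∀ k, 0 < R k)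
    (R₀ : ℝ) (hR₀ : R₀ = ∑ k, q k * R k) (hR₀gt : 1 < R₀)
    (Θstar : ℝ) (hΘstar : Θstar ∈ Set.Ioo (0:ℝ) 1)
    (hfix : ∑ k, q k * R k / (1 + Θstar * R k) = 1)
    (Θ0 : ℝ) (hΘ0 : Θ0 = 1 - 1 / R₀) :
    Θstar ≤ Θ0 ∧
    (Θstar = Θ0 ↔ ∀ k, 0 < q k → R k = R₀) ∧
    ((∃ k, 0 < q k ∧ R k ≠ R₀) → Θstar < Θ0) := by
  subst hΘ0
  have hR' : ∀ k, 0 ≤ R k := fun k ↦ (hR k).le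
  have hanti := strictAntiOn_fixedPointMap hq hR' (by linarith)
  have hΘstar₀ : Θstar ∈ Ici (0 : ℝ) := hΘstar.1.le
  have hΘ0₀ : 1 - 1 / R₀ ∈ Ici (0 : ℝ) := (one_sub_one_div_pos hR₀gt).le
  have hle : Θstar ≤ 1 - 1 / R₀ :=
    (hanti.le_iff_ge hΘ0₀ hΘstar₀).1 <| by
      rw [show fixedPointMap q R Θstar = 1 from hfix]
      exact fixedPointMap_le_one hq hqsum hR' hR₀ hR₀gt
  have heq : Θstar = 1 - 1 / R₀ ↔ ∀ k, 0 < q k → R k = R₀ := by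
    rw [← hanti.eq_iff_eq hΘ0₀ hΘstar₀, show fixedPointMap q R Θstar = 1 from hfix]
    exact fixedPointMap_eq_one_iff hq hqsum hR' hR₀ hR₀gt
  exact ⟨hle, heq, fun ⟨k, hk, hne⟩ ↦ hle.lt_of_ne fun h ↦ hne (heq.1 h k hk)⟩

/-- Heterogeneity in the `R_k` at fixed `R₀ = Σ q_k R_k` lowers the endemic
prevalence: `Θ* ≤ Θ⁰ = 1 - 1/R₀`, with equality iff `R_k = R₀` on the support
of `q`; strict inequality under genuine heterogeneity. -/
theorem heterogeneity_strictly_lowers_prevalence {K : Type*} [Fintype K] [Nonempty K]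
    (q R : K → ℝ) (hq : ∀ k, 0 ≤ q k) (hqsum : ∑ k, q k = 1) (hR : ∀ k, 0 < R k)
    (R₀ : ℝ) (hR₀ : R₀ = ∑ k, q k * R k) (hR₀gt : 1 < R₀)
    (Θstar : ℝ) (hΘstar : Θstar ∈ Set.Ioo (0:ℝ) 1)
    (hfix : ∑ k, q k * R k / (1 + Θstar * R k) = 1)
    (Θ0 : ℝ) (hΘ0 : Θ0 = 1 - 1 / R₀) :
    Θstar ≤ Θ0 ∧
    (Θstar = Θ0 ↔ ∀ k, 0 < q k → R k = R₀) ∧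
    ((∃ k, 0 < q k ∧ R k ≠ R₀) → Θstar < Θ0) :=
  heterogeneity_strictly_lowers_prevalence_general q R hq hqsum hR R₀ hR₀ hR₀gt Θstar hΘstar hfix Θ0
    hΘ0
end

section
/- Let R_0 = Σ_{k∈K} q_k R_k > 1 and let Θ^* ∈ (0,1) satisfy Σ_{k∈K} q_k R_k/(1+Θ^* R_k) = 1, and set Θ^0 = 1 − 1/R_0. Then the exact identity Θ^0/Θ^* = 1 + cov_q( R_k/(1+Θ^* R_k), R_k/R_0 ) holds, where cov_q(x_k,y_k) = Σ_k q_k x_k y_k − (Σ_k q_k x_k)(Σ_k q_k y_k). -/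
/-!
Write `a_k = R_k / (1 + Θ* R_k)`. Then `R_k - a_k = Θ* R_k a_k`, so averaging against `q` and
using the fixed-point equation `∑ q_k a_k = 1` gives `∑ q_k a_k R_k = (R₀ - 1) / Θ*`. Both
`a_k` and `R_k / R₀` have `q`-mean `1`, hence the covariance is `(R₀ - 1) / (Θ* R₀) - 1`,
which is `Θ⁰ / Θ* - 1`.
-/

open Finset

lemma div_one_add_mul_mul_self {θ r : ℝ} (hθ : θ ≠ 0) (hr : 1 + θ * r ≠ 0) :
    r / (1 + θ * r) * r = (r - r / (1 + θ * r)) / θ := by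
  have h : r / (1 + θ * r) * (1 + θ * r) = r := div_mul_cancel₀ r hr
  rw [eq_div_iff hθ]
  linear_combination h

lemma sum_mul_div_one_add_mul_mul_self {K : Type*} [Fintype K] (q R : K → ℝ) {θ : ℝ}
    (hθ : θ ≠ 0) (hR : ∀ k, 1 + θ * R k ≠ 0) :
    ∑ k, q k * (R k / (1 + θ * R k) * R k) =
      ((∑ k, q k * R k) - ∑ k, q k * (R k / (1 + θ * R k))) / θ := by
  simp_rw [div_one_add_mul_mul_self hθ (hR _)]
  rw [← sum_sub_distrib, sum_div]
  exact sum_congr rfl fun k _ => by ring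

theorem theta_covariance_identity_general {K : Type*} [Fintype K]
    (q R : K → ℝ) (hR : ∀ k, 0 < R k)
    (R₀ : ℝ) (hR₀ : R₀ = ∑ k, q k * R k) (hR₀gt : 1 < R₀)
    (Θstar : ℝ) (hΘstar : Θstar ∈ Set.Ioo (0:ℝ) 1)
    (hfix : ∑ k, q k * R k / (1 + Θstar * R k) = 1)
    (Θ0 : ℝ) (hΘ0 : Θ0 = 1 - 1 / R₀)
    (cov : (K → ℝ) → (K → ℝ) → ℝ)
    (hcov : ∀ x y : K → ℝ,
      cov x y = (∑ k, q k * (x k * y k)) - (∑ k, q k * x k) * (∑ k, q k * y k)) :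
    Θ0 / Θstar =
      1 + cov (fun k => R k / (1 + Θstar * R k)) (fun k => R k / R₀) := by
  have hΘ : Θstar ≠ 0 := hΘstar.1.ne'
  have hR₀ne : R₀ ≠ 0 := (zero_lt_one.trans hR₀gt).ne'
  have hden : ∀ k, 1 + Θstar * R k ≠ 0 := fun k =>
    (add_pos one_pos (mul_pos hΘstar.1 (hR k))).ne'
  have hmean_a : ∑ k, q k * (R k / (1 + Θstar * R k)) = 1 := by
    simpa only [mul_div_assoc] using hfix
  have hmean_b : ∑ k, q k * (R k / R₀) = 1 := by
    simp_rw [mul_div_assoc', ← sum_div, ← hR₀, div_self hR₀ne]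
  have hmean_ab : ∑ k, q k * (R k / (1 + Θstar * R k) * (R k / R₀)) = (R₀ - 1) / Θstar / R₀ := by
    simp_rw [← mul_div_assoc]
    rw [← sum_div, sum_mul_div_one_add_mul_mul_self q R hΘ hden, ← hR₀, hmean_a]
  rw [hcov, hmean_a, hmean_b, hmean_ab, hΘ0]
  field_simp
  ring

/-- Exact covariance identity:
`Θ⁰/Θ* = 1 + cov_q( R_k/(1+Θ* R_k), R_k/R₀ )`. -/
theorem theta_covariance_identity {K : Type*} [Fintype K] [Nonempty K]
    (q R : K → ℝ) (hq : ∀ k, 0 ≤ q k) (hqsum : ∑ k, q k = 1) (hR : ∀ k, 0 < R k)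
    (R₀ : ℝ) (hR₀ : R₀ = ∑ k, q k * R k) (hR₀gt : 1 < R₀)
    (Θstar : ℝ) (hΘstar : Θstar ∈ Set.Ioo (0:ℝ) 1)
    (hfix : ∑ k, q k * R k / (1 + Θstar * R k) = 1)
    (Θ0 : ℝ) (hΘ0 : Θ0 = 1 - 1 / R₀)
    (cov : (K → ℝ) → (K → ℝ) → ℝ)
    (hcov : ∀ x y : K → ℝ,
      cov x y = (∑ k, q k * (x k * y k)) - (∑ k, q k * x k) * (∑ k, q k * y k)) :
    Θ0 / Θstar =
      1 + cov (fun k => R k / (1 + Θstar * R k)) (fun k => R k / R₀) :=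
  theta_covariance_identity_general q R hR R₀ hR₀ hR₀gt Θstar hΘstar hfix Θ0 hΘ0 cov hcov
end

section
/- Let Q = (q_{ks}) be a nonnegative irreducible p×p matrix and let B_1, …, B_p be n×n matrices all of whose entries are strictly positive. Define the (pn)×(pn) block matrix M = (M_{ks})_{1≤k,s≤p} with n×n blocks M_{ks} = q_{ks} B_k. Then M is a nonnegative irreducible matrix, i.e. for every pair of indices (a,b) of M there exists an integer m ≥ 1 such that (M^m)_{ab} > 0. -/
/-- Irreducibility of the block matrix `M` with blocks `M_{ks} = q_{ks} B_k`,
where `Q` is nonnegative irreducible and each `B_k` is strictly positive. -/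
theorem block_matrix_irreducible (p n : ℕ) (hp : 0 < p) (hn : 0 < n)
    (Q : Matrix (Fin p) (Fin p) ℝ) (hQ : ∀ k s, 0 ≤ Q k s)
    (hQirr : ∀ k s, ∃ m : ℕ, 1 ≤ m ∧ 0 < (Q ^ m) k s)
    (B : Fin p → Matrix (Fin n) (Fin n) ℝ) (hB : ∀ k a b, 0 < B k a b)
    (M : Matrix (Fin p × Fin n) (Fin p × Fin n) ℝ)
    (hM : ∀ k s a b, M (k, a) (s, b) = Q k s * B k a b) :
    (∀ x y, 0 ≤ M x y) ∧
    (∀ x y, ∃ m : ℕ, 1 ≤ m ∧ 0 < (M ^ m) x y) := by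
  have hMnn : ∀ x y, 0 ≤ M x y := by
    rintro ⟨k, a⟩ ⟨s, b⟩
    rw [hM]
    exact mul_nonneg (hQ k s) (hB k a b).le
  -- nonnegativity of powers of Q
  have hQpow : ∀ m k s, 0 ≤ (Q ^ m) k s := by
    intro m
    induction m with
    | zero =>
        intro k s
        simp [Matrix.one_apply]
        split <;> norm_num
    | succ m ih =>
        intro k s
        rw [pow_succ, Matrix.mul_apply]
        exact Finset.sum_nonneg fun t _ => mul_nonneg (ih k t) (hQ t s)
  have hMpow : ∀ m x y, 0 ≤ (M ^ m) x y := by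
    intro m
    induction m with
    | zero =>
        intro x y
        simp [Matrix.one_apply]
        split <;> norm_num
    | succ m ih =>
        intro x y
        rw [pow_succ, Matrix.mul_apply]
        exact Finset.sum_nonneg fun t _ => mul_nonneg (ih x t) (hMnn t y)
  -- key lemma
  have key : ∀ m : ℕ, ∀ k s a b, 0 < (Q ^ (m + 1)) k s →
      0 < (M ^ (m + 1)) (k, a) (s, b) := by
    intro m
    induction m with
    | zero =>
        intro k s a b hq
        rw [pow_one] at hq ⊢
        rw [hM]
        exact mul_pos hq (hB k a b)
    | succ m ih =>
        intro k s a b hq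
        rw [pow_succ, Matrix.mul_apply] at hq
        have : ∃ t, (0 : ℝ) < (Q ^ (m + 1)) k t * Q t s := by
          by_contra h
          push_neg at h
          have : (∑ t, (Q ^ (m + 1)) k t * Q t s) ≤ 0 :=
            Finset.sum_nonpos fun t _ => h t
          linarith
        obtain ⟨t, ht⟩ := this
        have hqt : 0 < (Q ^ (m + 1)) k t := by
          rcases mul_pos_iff.mp ht with ⟨h1, _⟩ | ⟨h1, _⟩
          · exact h1
          · exact absurd h1 (not_lt.mpr (hQpow _ k t))
        have hts : 0 < Q t s := by
          rcases mul_pos_iff.mp ht with ⟨_, h2⟩ | ⟨_, h2⟩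
          · exact h2
          · exact absurd h2 (not_lt.mpr (hQ t s))
        have c0 : Fin n := ⟨0, hn⟩
        rw [pow_succ, Matrix.mul_apply]
        refine Finset.sum_pos' (fun x _ => mul_nonneg (hMpow _ _ _) (hMnn _ _))
          ⟨(t, c0), Finset.mem_univ _, ?_⟩
        have h1 := ih k t a c0 hqt
        have h2 : 0 < M (t, c0) (s, b) := by
          rw [hM]; exact mul_pos hts (hB t c0 b)
        exact mul_pos h1 h2
  refine ⟨hMnn, ?_⟩
  rintro ⟨k, a⟩ ⟨s, b⟩
  obtain ⟨m, hm1, hm⟩ := hQirr k s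
  obtain ⟨m', rfl⟩ := Nat.exists_eq_add_of_le hm1
  refine ⟨m' + 1, Nat.le_add_left 1 m', key m' k s a b ?_⟩
  rwa [Nat.add_comm] at hm
end

section
/- Suppose S_k, I_k, D_k, Θ_k > 0 for all k ∈ K satisfy β_k S_k Θ_k = (r_k+γ_k)(I_k+D_k), σ_k β_k I_k Θ_k = (r_k+γ_k) D_k, and Θ = Q(I+D). Define the (2p)×(2p) block matrix A^* with 2×2 blocks A_{ks} = q_{ks} B_k − δ_{ks} C_k, where B_k = β_k [[S_k, S_k],[σ_k I_k/2, σ_k I_k/2]] and C_k = (γ_k+r_k)·Id_2 + σ_k β_k Θ_k·[[1,0],[−1/2,0]]. Then A^* X^* = 0, where X^* = ((I_k, D_k)^T)_{k∈K} ∈ ℝ^{2p}. -/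
open Matrix

/-! Each `B_k` has two equal columns, so applied to the vector `b ↦ ∑ s, q_{ks} X*_{(s,b)}` it
only sees the sum of its two coordinates, which is `(Q (I + D))_k = Θ_k`. The two rows of
`A* X*` at `k` are then `β_k S_k Θ_k - (γ_k + r_k) I_k - σ_k β_k Θ_k I_k` and
`σ_k β_k I_k Θ_k - (γ_k + r_k) D_k`, which vanish by the two equilibrium equations. -/

theorem mulVec_apply_of_blocks {R K n : Type*} [CommRing R] [Fintype K] [DecidableEq K]
    [Fintype n] (Q : Matrix K K R) (B C : K → Matrix n n R)
    (A : Matrix (K × n) (K × n) R)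
    (hA : ∀ k s a b, A (k, a) (s, b) = Q k s * B k a b - if k = s then C k a b else 0)
    (X : K × n → R) (k : K) (a : n) :
    (A *ᵥ X) (k, a) =
      (B k *ᵥ fun b => (Q *ᵥ fun s => X (s, b)) k) a - (C k *ᵥ fun b => X (k, b)) a := by
  simp only [mulVec, dotProduct, Fintype.sum_prod_type, hA, sub_mul, ite_mul, zero_mul,
    Finset.sum_sub_distrib, Finset.mul_sum]
  congr 1
  · rw [Finset.sum_comm]
    exact Finset.sum_congr rfl fun b _ => Finset.sum_congr rfl fun s _ => by ring
  · simp only [Finset.sum_ite_irrel, Finset.sum_const_zero, Finset.sum_ite_eq, Finset.mem_univ,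
      ↓reduceIte]

theorem smul_rankOne_fin_two_mulVec {R : Type*} [CommRing R] (c x y : R) (v : Fin 2 → R) :
    (c • !![x, x; y, y]) *ᵥ v = (c * (v 0 + v 1)) • ![x, y] := by
  ext i
  fin_cases i <;> simp [mulVec, dotProduct, Fin.sum_univ_two] <;> ring

theorem smul_one_add_smul_mulVec_fin_two {F : Type*} [Field F] (c d x y : F) :
    (c • (1 : Matrix (Fin 2) (Fin 2) F) + d • !![1, 0; -(1/2 : F), 0]) *ᵥ ![x, y] =
      ![c * x + d * x, c * y - d * x / 2] := by
  ext i
  fin_cases i <;> simp [add_mulVec, smul_mulVec] <;> ring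

theorem neutral_matrix_kills_Xstar_general {K : Type*} [Fintype K] [DecidableEq K]
    (β r γ σ : K → ℝ)
    (Q : Matrix K K ℝ)
    (S I D Θ : K → ℝ)
    (heq1 : ∀ k, β k * S k * Θ k = (r k + γ k) * (I k + D k))
    (heq2 : ∀ k, σ k * β k * I k * Θ k = (r k + γ k) * D k)
    (hΘ : ∀ k, Θ k = ∑ s, Q k s * (I s + D s))
    (B C : K → Matrix (Fin 2) (Fin 2) ℝ)
    (hB : ∀ k, B k = β k • !![S k, S k; σ k * I k / 2, σ k * I k / 2])
    (hC : ∀ k, C k = (γ k + r k) • (1 : Matrix (Fin 2) (Fin 2) ℝ) +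
      (σ k * β k * Θ k) • !![1, 0; -(1/2 : ℝ), 0])
    (A : Matrix (K × Fin 2) (K × Fin 2) ℝ)
    (hA : ∀ k s a b, A (k, a) (s, b) = Q k s * B k a b - (if k = s then C k a b else 0))
    (X : K × Fin 2 → ℝ)
    (hX : ∀ k, X (k, 0) = I k ∧ X (k, 1) = D k) :
    A.mulVec X = 0 := by
  have hXI : (fun s => X (s, 0)) = I := funext fun s => (hX s).1
  have hXD : (fun s => X (s, 1)) = D := funext fun s => (hX s).2
  have hXk : ∀ k, (fun b => X (k, b)) = ![I k, D k] := fun k => by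
    funext b; fin_cases b; exacts [(hX k).1, (hX k).2]
  have hQX : ∀ k, (Q *ᵥ fun s => X (s, 0)) k + (Q *ᵥ fun s => X (s, 1)) k = Θ k := fun k => by
    rw [hΘ, ← Pi.add_apply, ← mulVec_add, hXI, hXD]
    simp only [mulVec, dotProduct, Pi.add_apply]
  ext ⟨k, a⟩
  rw [mulVec_apply_of_blocks Q B C A hA, hB, smul_rankOne_fin_two_mulVec, hQX, hXk, hC,
    smul_one_add_smul_mulVec_fin_two, Pi.zero_apply, sub_eq_zero]
  fin_cases a
  · simp only [Fin.zero_eta, Pi.smul_apply, cons_val_zero, smul_eq_mul]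
    linear_combination heq1 k - heq2 k
  · simp only [Fin.mk_one, Pi.smul_apply, cons_val_one, cons_val_fin_one, smul_eq_mul]
    linear_combination heq2 k

/-- The neutral matrix `A*` with blocks `A_{ks} = q_{ks} B_k − δ_{ks} C_k`
annihilates the stationary vector `X* = ((I_k, D_k))_{k}`. -/
theorem neutral_matrix_kills_Xstar {K : Type*} [Fintype K] [DecidableEq K] [Nonempty K]
    (β r γ σ : K → ℝ) (hβ : ∀ k, 0 < β k) (hr : ∀ k, 0 < r k)
    (hγ : ∀ k, 0 < γ k) (hσ : ∀ k, 0 < σ k)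
    (Q : Matrix K K ℝ) (hQ : ∀ k s, 0 ≤ Q k s)
    (S I D Θ : K → ℝ)
    (hSpos : ∀ k, 0 < S k) (hIpos : ∀ k, 0 < I k)
    (hDpos : ∀ k, 0 < D k) (hΘpos : ∀ k, 0 < Θ k)
    (heq1 : ∀ k, β k * S k * Θ k = (r k + γ k) * (I k + D k))
    (heq2 : ∀ k, σ k * β k * I k * Θ k = (r k + γ k) * D k)
    (hΘ : ∀ k, Θ k = ∑ s, Q k s * (I s + D s))
    (B C : K → Matrix (Fin 2) (Fin 2) ℝ)
    (hB : ∀ k, B k = β k • !![S k, S k; σ k * I k / 2, σ k * I k / 2])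
    (hC : ∀ k, C k = (γ k + r k) • (1 : Matrix (Fin 2) (Fin 2) ℝ) +
      (σ k * β k * Θ k) • !![1, 0; -(1/2 : ℝ), 0])
    (A : Matrix (K × Fin 2) (K × Fin 2) ℝ)
    (hA : ∀ k s a b, A (k, a) (s, b) = Q k s * B k a b - (if k = s then C k a b else 0))
    (X : K × Fin 2 → ℝ)
    (hX : ∀ k, X (k, 0) = I k ∧ X (k, 1) = D k) :
    A.mulVec X = 0 :=
  neutral_matrix_kills_Xstar_general β r γ σ Q S I D Θ heq1 heq2 hΘ B C hB hC A hA X hX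
end

section
/- Suppose Q is additionally irreducible and S_k, I_k, D_k, Θ_k > 0 for all k ∈ K satisfy β_k S_k Θ_k = (r_k+γ_k)(I_k+D_k), σ_k β_k I_k Θ_k = (r_k+γ_k) D_k, and Θ = Q(I+D). Then the matrix A^* defined blockwise by A_{ks} = q_{ks} B_k − δ_{ks} C_k with B_k = β_k [[S_k, S_k],[σ_k I_k/2, σ_k I_k/2]] and C_k = (γ_k+r_k)·Id_2 + σ_k β_k Θ_k·[[1,0],[−1/2,0]] is a Metzler matrix, it is irreducible, 0 is an eigenvalue of A^* whose eigenspace is one-dimensional and spanned by the positive vector X^* = ((I_k, D_k)^T)_{k∈K}, and every nonzero eigenvalue of A^* has strictly negative real part (i.e. the spectral bound of A^* is 0 and is a simple eigenvalue). -/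
/-!
The equilibrium relations say exactly that `A X = 0`. For `m` large, `M = A + m • 1` is
nonnegative, and each positive entry `q_ks` makes the whole `(k, s)` block of `M` positive (the
blocks `B_k` are positive and the off-diagonal entries of `C_k` are nonpositive), so `M` inherits
irreducibility from `Q`; `X` is then a positive eigenvector of `M` for the eigenvalue `m`.
Comparing an eigenvector `u` of `M` with `X` at an index maximising `‖u i‖ / X i` bounds every
eigenvalue of `M` by `m` in modulus, so an eigenvalue `μ` of `A` lies in the closed disc of radius
`m` centred at `-m`, which meets the imaginary axis only at `0`. For a real `v` with `A v = 0`,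
let `c` be the least ratio `v i / X i`: then `w = v - c X` is nonnegative, vanishes at `i` and
satisfies `M ^ n w = m ^ n w`, so irreducibility forces `w = 0`.
-/

open Matrix Finset

theorem Complex.re_neg_of_norm_add_ofReal_le {z : ℂ} {m : ℝ} (h : ‖z + m‖ ≤ m) (hz : z ≠ 0) :
    z.re < 0 := by
  have hsq : Complex.normSq (z + m) ≤ m * m := by
    rw [← Complex.sq_norm, sq]
    exact mul_self_le_mul_self (norm_nonneg _) h
  rw [Complex.normSq_apply] at hsq
  simp only [Complex.add_re, Complex.ofReal_re, Complex.add_im, Complex.ofReal_im, add_zero]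
    at hsq
  have hz' : 0 < z.re * z.re + z.im * z.im := by
    rw [← Complex.normSq_apply]; exact Complex.normSq_pos.2 hz
  nlinarith [norm_nonneg (z + m)]

namespace Matrix

variable {ι : Type*} [Fintype ι]

theorem pow_mulVec_eq_pow_smul [DecidableEq ι] {R : Type*} [CommSemiring R] {M : Matrix ι ι R}
    {c : R} {v : ι → R} (h : M *ᵥ v = c • v) (n : ℕ) : (M ^ n) *ᵥ v = c ^ n • v := by
  induction n with
  | zero => simp
  | succ n ih => rw [pow_succ', ← mulVec_mulVec, ih, mulVec_smul, h, smul_smul, pow_succ]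

theorem IsIrreducible.eq_zero_of_mulVec_eq_smul [DecidableEq ι] {M : Matrix ι ι ℝ}
    (hM : M.IsIrreducible) {c : ℝ} {w : ι → ℝ} (hw : ∀ i, 0 ≤ w i) (hMw : M *ᵥ w = c • w)
    {i : ι} (hi : w i = 0) : w = 0 := by
  by_contra hne
  obtain ⟨j, hj⟩ := Function.ne_iff.1 hne
  obtain ⟨n, -, hn⟩ := (isIrreducible_iff_exists_pow_pos hM.nonneg).1 hM i j
  have hzero : ((M ^ n) *ᵥ w) i = 0 := by simp [pow_mulVec_eq_pow_smul hMw, hi]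
  have hpos : 0 < ((M ^ n) *ᵥ w) i :=
    (sum_pos_iff_of_nonneg fun k _ => mul_nonneg (pow_apply_nonneg hM.nonneg n i k) (hw k)).2
      ⟨j, mem_univ j, mul_pos hn ((hw j).lt_of_ne' hj)⟩
  exact hpos.ne' hzero

theorem IsIrreducible.eq_smul_of_mulVec_eq_smul [DecidableEq ι] {M : Matrix ι ι ℝ}
    (hM : M.IsIrreducible) {c : ℝ} {X : ι → ℝ} (hX : ∀ i, 0 < X i) (hMX : M *ᵥ X = c • X)
    {v : ι → ℝ} (hv : M *ᵥ v = c • v) : ∃ a : ℝ, v = a • X := by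
  cases isEmpty_or_nonempty ι
  · exact ⟨0, Subsingleton.elim _ _⟩
  obtain ⟨i, -, hi⟩ := exists_min_image univ (fun j => v j / X j) univ_nonempty
  refine ⟨v i / X i, sub_eq_zero.1 (hM.eq_zero_of_mulVec_eq_smul (c := c) (i := i) ?_ ?_ ?_)⟩
  · intro j
    have := (le_div_iff₀ (hX j)).1 (hi j (mem_univ j))
    simp only [Pi.sub_apply, Pi.smul_apply, smul_eq_mul, sub_nonneg]
    linarith
  · rw [mulVec_sub, mulVec_smul, hv, hMX, smul_sub, smul_comm]
  · simp [div_mul_cancel₀ _ (hX i).ne']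

theorem norm_le_of_mulVec_eq_smul {M : Matrix ι ι ℝ} (hM : ∀ i j, 0 ≤ M i j) {c : ℝ}
    {X : ι → ℝ} (hX : ∀ i, 0 < X i) (hMX : M *ᵥ X = c • X) {ν : ℂ} {u : ι → ℂ} (hu0 : u ≠ 0)
    (hu : M.map Complex.ofReal *ᵥ u = ν • u) : ‖ν‖ ≤ c := by
  have : Nonempty ι := by
    obtain ⟨j, -⟩ := Function.ne_iff.1 hu0
    exact ⟨j⟩
  obtain ⟨i, -, hi⟩ := exists_max_image univ (fun j => ‖u j‖ / X j) univ_nonempty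
  set ρ := ‖u i‖ / X i
  have hρ : 0 < ρ := by
    obtain ⟨j, hj⟩ := Function.ne_iff.1 hu0
    exact (div_pos (norm_pos_iff.2 hj) (hX j)).trans_le (hi j (mem_univ j))
  have hbound : ∀ j, ‖u j‖ ≤ ρ * X j := fun j => (div_le_iff₀ (hX j)).1 (hi j (mem_univ j))
  have hMXi : ∑ j, M i j * X j = c * X i := congrFun hMX i
  have key : ‖ν‖ * (ρ * X i) ≤ c * (ρ * X i) :=
    calc ‖ν‖ * (ρ * X i) = ‖(M.map Complex.ofReal *ᵥ u) i‖ := by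
          rw [hu, Pi.smul_apply, smul_eq_mul, norm_mul, div_mul_cancel₀ _ (hX i).ne']
      _ ≤ ∑ j, M i j * ‖u j‖ := by
          refine (norm_sum_le _ _).trans_eq (sum_congr rfl fun j _ => ?_)
          simp [abs_of_nonneg (hM i j)]
      _ ≤ ∑ j, M i j * (ρ * X j) :=
          sum_le_sum fun j _ => mul_le_mul_of_nonneg_left (hbound j) (hM i j)
      _ = c * (ρ * X i) := by simp_rw [mul_left_comm _ ρ, ← mul_sum, hMXi]
  exact le_of_mul_le_mul_right key (mul_pos hρ (hX i))

theorem add_smul_one_mulVec [DecidableEq ι] {R : Type*} [CommSemiring R] (A : Matrix ι ι R)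
    (m : R) (v : ι → R) : (A + m • 1) *ᵥ v = A *ᵥ v + m • v := by
  rw [add_mulVec, smul_mulVec, one_mulVec]

theorem exists_diag_add_pos (A : Matrix ι ι ℝ) : ∃ m : ℝ, ∀ i, 0 < A i i + m :=
  ⟨1 + ∑ i, |A i i|, fun i => by
    have := single_le_sum (fun j _ => abs_nonneg (A j j)) (mem_univ i)
    linarith [neg_abs_le (A i i)]⟩

theorem add_smul_one_apply_nonneg {ι : Type*} [DecidableEq ι] {A : Matrix ι ι ℝ}
    (hA : ∀ i j, i ≠ j → 0 ≤ A i j) {m : ℝ} (hm : ∀ i, 0 ≤ A i i + m) (i j : ι) :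
    0 ≤ (A + m • 1) i j := by
  obtain rfl | hij := eq_or_ne i j
  · simpa using hm i
  · simpa [hij] using hA i j hij

theorem eq_smul_of_mulVec_eq_zero [DecidableEq ι] {A : Matrix ι ι ℝ} {m : ℝ}
    (hirr : (A + m • 1).IsIrreducible) {X : ι → ℝ} (hX : ∀ i, 0 < X i) (hAX : A *ᵥ X = 0)
    {v : ι → ℝ} (hv : A *ᵥ v = 0) : ∃ c : ℝ, v = c • X :=
  hirr.eq_smul_of_mulVec_eq_smul hX (by rw [add_smul_one_mulVec, hAX, zero_add])
    (by rw [add_smul_one_mulVec, hv, zero_add])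

theorem re_neg_of_mem_spectrum [DecidableEq ι] {A : Matrix ι ι ℝ} {m : ℝ}
    (hM : ∀ i j, 0 ≤ (A + m • 1) i j) {X : ι → ℝ} (hX : ∀ i, 0 < X i) (hAX : A *ᵥ X = 0)
    {μ : ℂ} (hμ : μ ∈ spectrum ℂ (A.map Complex.ofReal)) (hμ0 : μ ≠ 0) : μ.re < 0 := by
  rw [← spectrum_toLin', ← Module.End.hasEigenvalue_iff_mem_spectrum] at hμ
  obtain ⟨u, hu, hu0⟩ := hμ.exists_hasEigenvector
  rw [Module.End.mem_eigenspace_iff, toLin'_apply] at hu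
  refine Complex.re_neg_of_norm_add_ofReal_le (m := m) ?_ hμ0
  refine norm_le_of_mulVec_eq_smul hM hX (by rw [add_smul_one_mulVec, hAX, zero_add]) hu0 ?_
  have hmap : (A + m • 1).map Complex.ofReal = A.map Complex.ofReal + (m : ℂ) • 1 := by
    ext i j
    by_cases hij : i = j <;> simp [hij]
  rw [hmap, add_smul_one_mulVec, hu, add_smul]

theorem pow_succ_apply_pos_of_blocks_pos {K α : Type*} [Fintype K] [DecidableEq K]
    [Fintype α] [DecidableEq α] {Q : Matrix K K ℝ} (hQ : ∀ k s, 0 ≤ Q k s)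
    {M : Matrix (K × α) (K × α) ℝ} (hM : ∀ x y, 0 ≤ M x y)
    (hpos : ∀ k s a b, 0 < Q k s → 0 < M (k, a) (s, b)) (n : ℕ) {k s : K} (a b : α)
    (hQn : 0 < (Q ^ (n + 1)) k s) : 0 < (M ^ (n + 1)) (k, a) (s, b) := by
  induction n generalizing k a with
  | zero => simpa using hpos k s a b (by simpa using hQn)
  | succ n ih =>
    rw [pow_succ', mul_apply, sum_pos_iff_of_nonneg fun t _ =>
      mul_nonneg (hQ k t) (pow_apply_nonneg hQ _ t s)] at hQn
    obtain ⟨t, -, hQt⟩ := hQn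
    rw [pow_succ', mul_apply, sum_pos_iff_of_nonneg fun y _ =>
      mul_nonneg (hM _ y) (pow_apply_nonneg hM _ y _)]
    exact ⟨(t, b), mem_univ _, mul_pos
      (hpos k t a b (pos_of_mul_pos_left hQt (pow_apply_nonneg hQ _ t s)))
      (ih b (pos_of_mul_pos_right hQt (hQ k t)))⟩

theorem isIrreducible_of_blocks_pos {K α : Type*} [Fintype K] [DecidableEq K] [Fintype α]
    [DecidableEq α] {Q : Matrix K K ℝ} (hQ : Q.IsIrreducible) {M : Matrix (K × α) (K × α) ℝ}
    (hM : ∀ x y, 0 ≤ M x y) (hpos : ∀ k s a b, 0 < Q k s → 0 < M (k, a) (s, b)) :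
    M.IsIrreducible := by
  rw [isIrreducible_iff_exists_pow_pos hM]
  rintro ⟨k, a⟩ ⟨s, b⟩
  obtain ⟨n, hn, hQn⟩ := (isIrreducible_iff_exists_pow_pos hQ.nonneg).1 hQ k s
  obtain ⟨n, rfl⟩ := Nat.exists_eq_succ_of_ne_zero hn.ne'
  exact ⟨n + 1, n.succ_pos, pow_succ_apply_pos_of_blocks_pos hQ.nonneg hM hpos n a b hQn⟩

section BlockCoupling

variable {K α : Type*} [DecidableEq K]

def blockCoupling (Q : Matrix K K ℝ) (B C : K → Matrix α α ℝ) : Matrix (K × α) (K × α) ℝ :=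
  of fun x y => Q x.1 y.1 * B x.1 x.2 y.2 - if x.1 = y.1 then C x.1 x.2 y.2 else 0

@[simp]
theorem blockCoupling_apply (Q : Matrix K K ℝ) (B C : K → Matrix α α ℝ) (k s : K) (a b : α) :
    blockCoupling Q B C (k, a) (s, b) = Q k s * B k a b - if k = s then C k a b else 0 :=
  rfl

variable {Q : Matrix K K ℝ} {B C : K → Matrix α α ℝ}

theorem blockCoupling_apply_nonneg (hQ : ∀ k s, 0 ≤ Q k s) (hB : ∀ k a b, 0 ≤ B k a b)
    (hC : ∀ k a b, a ≠ b → C k a b ≤ 0) {x y : K × α} (hxy : x ≠ y) :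
    0 ≤ blockCoupling Q B C x y := by
  obtain ⟨k, a⟩ := x
  obtain ⟨s, b⟩ := y
  rw [blockCoupling_apply]
  split_ifs with hks
  · subst hks
    have hab : a ≠ b := fun h => hxy (h ▸ rfl)
    linarith [mul_nonneg (hQ k k) (hB k a b), hC k a b hab]
  · simpa using mul_nonneg (hQ k s) (hB k a b)

theorem blockCoupling_apply_pos (hB : ∀ k a b, 0 < B k a b) (hC : ∀ k a b, a ≠ b → C k a b ≤ 0)
    {k s : K} {a b : α} (hQks : 0 < Q k s) (hne : (k, a) ≠ (s, b)) :
    0 < blockCoupling Q B C (k, a) (s, b) := by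
  rw [blockCoupling_apply]
  split_ifs with hks
  · subst hks
    have hab : a ≠ b := fun h => hne (h ▸ rfl)
    linarith [mul_pos hQks (hB k a b), hC k a b hab]
  · simpa using mul_pos hQks (hB k a b)

theorem isIrreducible_blockCoupling_add_smul_one [Fintype K] [Fintype α] [DecidableEq α]
    (hQ : Q.IsIrreducible) (hB : ∀ k a b, 0 < B k a b) (hC : ∀ k a b, a ≠ b → C k a b ≤ 0)
    {m : ℝ} (hm : ∀ x, 0 < blockCoupling Q B C x x + m) :
    (blockCoupling Q B C + m • 1).IsIrreducible := by
  refine isIrreducible_of_blocks_pos hQ (add_smul_one_apply_nonneg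
    (fun x y => blockCoupling_apply_nonneg hQ.nonneg (fun k a b => (hB k a b).le) hC)
    (fun x => (hm x).le)) fun k s a b hQks => ?_
  by_cases hxy : (k, a) = (s, b)
  · simpa [hxy] using hm (s, b)
  · simpa [hxy] using blockCoupling_apply_pos hB hC hQks hxy

theorem blockCoupling_mulVec_apply [Fintype K] [Fintype α] (X : K × α → ℝ) (k : K) (a : α) :
    (blockCoupling Q B C *ᵥ X) (k, a) =
      ∑ b, B k a b * ∑ s, Q k s * X (s, b) - ∑ b, C k a b * X (k, b) := by
  simp only [mulVec, dotProduct, Fintype.sum_prod_type, blockCoupling_apply, sub_mul,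
    sum_sub_distrib, ite_mul, zero_mul]
  rw [sum_comm (f := fun s b => ite _ _ _), sum_comm (f := fun s b => Q k s * _ * _)]
  simp [mul_sum, mul_left_comm, mul_assoc]

end BlockCoupling

end Matrix

theorem neutralB_apply_pos {β S σ I : ℝ} (hβ : 0 < β) (hS : 0 < S) (hσ : 0 < σ) (hI : 0 < I)
    (a b : Fin 2) : 0 < (β • !![S, S; σ * I / 2, σ * I / 2]) a b := by
  fin_cases a <;> fin_cases b <;> simp <;> positivity

theorem neutralC_apply_nonpos {c d : ℝ} (hd : 0 ≤ d) {a b : Fin 2} (hab : a ≠ b) :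
    (c • (1 : Matrix (Fin 2) (Fin 2) ℝ) + d • !![1, 0; -(1/2 : ℝ), 0]) a b ≤ 0 := by
  fin_cases a <;> fin_cases b <;> simp at hab ⊢
  positivity

theorem neutral_row_balance {β r γ σ S I D Θ : ℝ} (heq1 : β * S * Θ = (r + γ) * (I + D))
    (heq2 : σ * β * I * Θ = (r + γ) * D) {x y : Fin 2 → ℝ} (hx : x 0 = I ∧ x 1 = D)
    (hy : y 0 + y 1 = Θ) (a : Fin 2) :
    ∑ b, (β • !![S, S; σ * I / 2, σ * I / 2]) a b * y b =
      ∑ b, ((γ + r) • (1 : Matrix (Fin 2) (Fin 2) ℝ) +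
        (σ * β * Θ) • !![1, 0; -(1/2 : ℝ), 0]) a b * x b := by
  obtain ⟨hx0, hx1⟩ := hx
  subst hy
  fin_cases a <;> simp [Fin.sum_univ_two, hx0, hx1]
  · linear_combination heq1 - heq2
  · linear_combination heq2

theorem neutral_matrix_spectral_properties_general {K : Type*} [Fintype K] [DecidableEq K]
    (β r γ σ : K → ℝ) (hβ : ∀ k, 0 < β k) (hσ : ∀ k, 0 < σ k)
    (Q : Matrix K K ℝ) (hQ : ∀ k s, 0 ≤ Q k s)
    (hQirr : ∀ k s, ∃ n : ℕ, 1 ≤ n ∧ 0 < (Q ^ n) k s)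
    (S I D Θ : K → ℝ)
    (hSpos : ∀ k, 0 < S k) (hIpos : ∀ k, 0 < I k)
    (hDpos : ∀ k, 0 < D k) (hΘpos : ∀ k, 0 < Θ k)
    (heq1 : ∀ k, β k * S k * Θ k = (r k + γ k) * (I k + D k))
    (heq2 : ∀ k, σ k * β k * I k * Θ k = (r k + γ k) * D k)
    (hΘ : ∀ k, Θ k = ∑ s, Q k s * (I s + D s))
    (B C : K → Matrix (Fin 2) (Fin 2) ℝ)
    (hB : ∀ k, B k = β k • !![S k, S k; σ k * I k / 2, σ k * I k / 2])
    (hC : ∀ k, C k = (γ k + r k) • (1 : Matrix (Fin 2) (Fin 2) ℝ) +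
      (σ k * β k * Θ k) • !![1, 0; -(1/2 : ℝ), 0])
    (A : Matrix (K × Fin 2) (K × Fin 2) ℝ)
    (hA : ∀ k s a b, A (k, a) (s, b) = Q k s * B k a b - (if k = s then C k a b else 0))
    (X : K × Fin 2 → ℝ)
    (hX : ∀ k, X (k, 0) = I k ∧ X (k, 1) = D k) :
    (∀ x y : K × Fin 2, x ≠ y → 0 ≤ A x y) ∧
    (∃ m : ℝ, (∀ x y, 0 ≤ (A + m • (1 : Matrix (K × Fin 2) (K × Fin 2) ℝ)) x y) ∧
      (∀ x y, ∃ n : ℕ, 1 ≤ n ∧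
        0 < ((A + m • (1 : Matrix (K × Fin 2) (K × Fin 2) ℝ)) ^ n) x y)) ∧
    (∀ x, 0 < X x) ∧
    A.mulVec X = 0 ∧
    (∀ v : K × Fin 2 → ℝ, A.mulVec v = 0 → ∃ c : ℝ, v = c • X) ∧
    (∀ μ ∈ spectrum ℂ (A.map Complex.ofReal), μ ≠ 0 → μ.re < 0) := by
  obtain rfl : A = blockCoupling Q B C := by ext ⟨k, a⟩ ⟨s, b⟩; exact hA k s a b
  have hBpos (k a b) : 0 < B k a b :=
    hB k ▸ neutralB_apply_pos (hβ k) (hSpos k) (hσ k) (hIpos k) a b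
  have hCoff (k a b) (hab : a ≠ b) : C k a b ≤ 0 :=
    hC k ▸ neutralC_apply_nonpos (mul_pos (mul_pos (hσ k) (hβ k)) (hΘpos k)).le hab
  have hXpos : ∀ x, 0 < X x := by
    rintro ⟨k, a⟩
    fin_cases a
    · simpa [(hX k).1] using hIpos k
    · simpa [(hX k).2] using hDpos k
  have hAX : blockCoupling Q B C *ᵥ X = 0 := by
    ext ⟨k, a⟩
    rw [blockCoupling_mulVec_apply, Pi.zero_apply, sub_eq_zero, hB, hC]
    refine neutral_row_balance (heq1 k) (heq2 k) (hX k) ?_ a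
    simp [hΘ k, ← sum_add_distrib, (hX _).1, (hX _).2, mul_add]
  have hQ_irreducible : Q.IsIrreducible := (isIrreducible_iff_exists_pow_pos hQ).2 hQirr
  obtain ⟨m, hm⟩ := exists_diag_add_pos (blockCoupling Q B C)
  have hirr := isIrreducible_blockCoupling_add_smul_one hQ_irreducible hBpos hCoff hm
  refine ⟨fun x y => blockCoupling_apply_nonneg hQ (fun k a b => (hBpos k a b).le) hCoff,
    ⟨m, hirr.nonneg, (isIrreducible_iff_exists_pow_pos hirr.nonneg).1 hirr⟩, hXpos, hAX,
    fun v => eq_smul_of_mulVec_eq_zero hirr hXpos hAX,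
    fun μ => re_neg_of_mem_spectrum hirr.nonneg hXpos hAX⟩

/-- Spectral properties of the neutral matrix `A*`: it is Metzler, irreducible
(as a Metzler matrix), has `0` as an eigenvalue with one-dimensional eigenspace
spanned by the positive vector `X*`, and every other eigenvalue has strictly
negative real part. -/
theorem neutral_matrix_spectral_properties {K : Type*} [Fintype K] [DecidableEq K] [Nonempty K]
    (β r γ σ : K → ℝ) (hβ : ∀ k, 0 < β k) (hr : ∀ k, 0 < r k)
    (hγ : ∀ k, 0 < γ k) (hσ : ∀ k, 0 < σ k)
    (Q : Matrix K K ℝ) (hQ : ∀ k s, 0 ≤ Q k s)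
    (hQirr : ∀ k s, ∃ n : ℕ, 1 ≤ n ∧ 0 < (Q ^ n) k s)
    (S I D Θ : K → ℝ)
    (hSpos : ∀ k, 0 < S k) (hIpos : ∀ k, 0 < I k)
    (hDpos : ∀ k, 0 < D k) (hΘpos : ∀ k, 0 < Θ k)
    (heq1 : ∀ k, β k * S k * Θ k = (r k + γ k) * (I k + D k))
    (heq2 : ∀ k, σ k * β k * I k * Θ k = (r k + γ k) * D k)
    (hΘ : ∀ k, Θ k = ∑ s, Q k s * (I s + D s))
    (B C : K → Matrix (Fin 2) (Fin 2) ℝ)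
    (hB : ∀ k, B k = β k • !![S k, S k; σ k * I k / 2, σ k * I k / 2])
    (hC : ∀ k, C k = (γ k + r k) • (1 : Matrix (Fin 2) (Fin 2) ℝ) +
      (σ k * β k * Θ k) • !![1, 0; -(1/2 : ℝ), 0])
    (A : Matrix (K × Fin 2) (K × Fin 2) ℝ)
    (hA : ∀ k s a b, A (k, a) (s, b) = Q k s * B k a b - (if k = s then C k a b else 0))
    (X : K × Fin 2 → ℝ)
    (hX : ∀ k, X (k, 0) = I k ∧ X (k, 1) = D k) :
    (∀ x y : K × Fin 2, x ≠ y → 0 ≤ A x y) ∧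
    (∃ m : ℝ, (∀ x y, 0 ≤ (A + m • (1 : Matrix (K × Fin 2) (K × Fin 2) ℝ)) x y) ∧
      (∀ x y, ∃ n : ℕ, 1 ≤ n ∧
        0 < ((A + m • (1 : Matrix (K × Fin 2) (K × Fin 2) ℝ)) ^ n) x y)) ∧
    (∀ x, 0 < X x) ∧
    A.mulVec X = 0 ∧
    (∀ v : K × Fin 2 → ℝ, A.mulVec v = 0 → ∃ c : ℝ, v = c • X) ∧
    (∀ μ ∈ spectrum ℂ (A.map Complex.ofReal), μ ≠ 0 → μ.re < 0) :=
  neutral_matrix_spectral_properties_general β r γ σ hβ hσ Q hQ hQirr S I D Θ hSpos hIpos hDpos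
    hΘpos heq1 heq2 hΘ B C hB hC A hA X hX
end

section
/- Suppose S_k, I_k, D_k, Θ_k > 0 for all k ∈ K satisfy β_k S_k Θ_k = (r_k+γ_k)(I_k+D_k), σ_k β_k I_k Θ_k = (r_k+γ_k) D_k, and Θ = Q(I+D), and let π = (π_k)_{k∈K} be a vector with positive entries satisfying π^T·diag(R_k S_k)·Q = π^T. Setting ξ_k = σ_k β_k Θ_k/(r_k+γ_k+σ_k β_k Θ_k), define the row vector ω = (φ_k, ψ_k)_{k∈K} ∈ ℝ^{2p} by φ_k = (π_k/(r_k+γ_k))·(1 − ξ_k/2) and ψ_k = π_k/(r_k+γ_k). Then ω A^* = 0, where A^* is the block matrix with blocks A_{ks} = q_{ks} B_k − δ_{ks} C_k, B_k = β_k [[S_k, S_k],[σ_k I_k/2, σ_k I_k/2]], C_k = (γ_k+r_k)·Id_2 + σ_k β_k Θ_k·[[1,0],[−1/2,0]]. -/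
open Matrix

/-- The explicit positive left null vector `ω = (φ_k, ψ_k)_k` of the neutral
matrix `A*`: with `φ_k = (π_k/(r_k+γ_k))(1 - ξ_k/2)` and `ψ_k = π_k/(r_k+γ_k)`,
one has `ω A* = 0`. -/
theorem neutral_matrix_left_null_vector {K : Type*} [Fintype K] [DecidableEq K] [Nonempty K]
    (β r γ σ : K → ℝ) (hβ : ∀ k, 0 < β k) (hr : ∀ k, 0 < r k)
    (hγ : ∀ k, 0 < γ k) (hσ : ∀ k, 0 < σ k)
    (R : K → ℝ) (hR : ∀ k, R k = β k / (r k + γ k))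
    (Q : Matrix K K ℝ) (hQ : ∀ k s, 0 ≤ Q k s)
    (S I D Θ : K → ℝ)
    (hSpos : ∀ k, 0 < S k) (hIpos : ∀ k, 0 < I k)
    (hDpos : ∀ k, 0 < D k) (hΘpos : ∀ k, 0 < Θ k)
    (heq1 : ∀ k, β k * S k * Θ k = (r k + γ k) * (I k + D k))
    (heq2 : ∀ k, σ k * β k * I k * Θ k = (r k + γ k) * D k)
    (hΘ : ∀ k, Θ k = ∑ s, Q k s * (I s + D s))
    (π : K → ℝ) (hπpos : ∀ k, 0 < π k)
    (hπeig : Matrix.vecMul π (Matrix.diagonal (fun k => R k * S k) * Q) = π)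
    (ξ : K → ℝ)
    (hξ : ∀ k, ξ k = σ k * β k * Θ k / (r k + γ k + σ k * β k * Θ k))
    (B C : K → Matrix (Fin 2) (Fin 2) ℝ)
    (hB : ∀ k, B k = β k • !![S k, S k; σ k * I k / 2, σ k * I k / 2])
    (hC : ∀ k, C k = (γ k + r k) • (1 : Matrix (Fin 2) (Fin 2) ℝ) +
      (σ k * β k * Θ k) • !![1, 0; -(1/2 : ℝ), 0])
    (A : Matrix (K × Fin 2) (K × Fin 2) ℝ)
    (hA : ∀ k s a b, A (k, a) (s, b) = Q k s * B k a b - (if k = s then C k a b else 0))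
    (ω : K × Fin 2 → ℝ)
    (hω : ∀ k, ω (k, 0) = π k / (r k + γ k) * (1 - ξ k / 2) ∧
      ω (k, 1) = π k / (r k + γ k)) :
    Matrix.vecMul ω A = 0 := by
  have hrγ : ∀ k, (0:ℝ) < r k + γ k := fun k => add_pos (hr k) (hγ k)
  have hden : ∀ k, (0:ℝ) < r k + γ k + σ k * β k * Θ k := fun k =>
    add_pos (hrγ k) (mul_pos (mul_pos (hσ k) (hβ k)) (hΘpos k))
  have hξS : ∀ k, ξ k * S k = σ k * I k := by
    intro k
    rw [hξ, div_mul_eq_mul_div, div_eq_iff (hden k).ne']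
    linear_combination σ k * heq1 k - σ k * heq2 k
  have heig : ∀ s, (∑ k, π k * (R k * S k * Q k s)) = π s := by
    intro s
    have := congrFun hπeig s
    simpa [Matrix.vecMul, dotProduct, Matrix.diagonal_mul, mul_assoc] using this
  have hkey : ∀ k (b : Fin 2), ω (k, 0) * B k 0 b + ω (k, 1) * B k 1 b
      = π k * (R k * S k) := by
    intro k b
    obtain ⟨h0, h1⟩ := hω k
    have hb0 : B k 0 b = β k * S k := by rw [hB]; fin_cases b <;> simp
    have hb1 : B k 1 b = β k * (σ k * I k / 2) := by rw [hB]; fin_cases b <;> simp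
    rw [h0, h1, hb0, hb1, hR]
    linear_combination (-(π k * β k) / (r k + γ k) / 2) * hξS k
  have hCω : ∀ s (b : Fin 2), ω (s, 0) * C s 0 b + ω (s, 1) * C s 1 b = π s := by
    intro s b
    obtain ⟨h0, h1⟩ := hω s
    have c00 : C s 0 0 = γ s + r s + σ s * β s * Θ s := by
      simp [hC, Matrix.one_apply]
    have c10 : C s 1 0 = -(σ s * β s * Θ s) / 2 := by
      simp [hC, Matrix.one_apply]; ring
    have c01 : C s 0 1 = 0 := by simp [hC, Matrix.one_apply]
    have c11 : C s 1 1 = γ s + r s := by simp [hC, Matrix.one_apply]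
    fin_cases b
    · simp only [Fin.zero_eta, Fin.isValue]
      rw [h0, h1, c00, c10, hξ]
      field_simp [(hrγ s).ne', (hden s).ne']
      ring
    · simp only [Fin.mk_one, Fin.isValue]
      rw [h0, h1, c01, c11, mul_zero, zero_add, div_mul_eq_mul_div,
        div_eq_iff (hrγ s).ne']
      ring
  funext p
  obtain ⟨s, b⟩ := p
  have : Matrix.vecMul ω A (s, b)
      = ∑ k, (ω (k, 0) * A (k, 0) (s, b) + ω (k, 1) * A (k, 1) (s, b)) := by
    rw [Matrix.vecMul, dotProduct, Fintype.sum_prod_type]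
    exact Finset.sum_congr rfl fun k _ => by rw [Fin.sum_univ_two]
  rw [Pi.zero_apply, this]
  have hterm : ∀ k, ω (k, 0) * A (k, 0) (s, b) + ω (k, 1) * A (k, 1) (s, b)
      = π k * (R k * S k * Q k s) - (if k = s then π s else 0) := by
    intro k
    rw [hA, hA]
    by_cases hks : k = s
    · subst hks
      simp only [eq_self_iff_true, if_true]
      linear_combination Q k k * hkey k b - hCω k b
    · simp only [if_neg hks, sub_zero]
      calc ω (k, 0) * (Q k s * B k 0 b) + ω (k, 1) * (Q k s * B k 1 b)
          = (ω (k, 0) * B k 0 b + ω (k, 1) * B k 1 b) * Q k s := by ring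
        _ = π k * (R k * S k * Q k s) := by rw [hkey k b]; ring
  rw [Finset.sum_congr rfl fun k _ => hterm k, Finset.sum_sub_distrib,
    Finset.sum_ite_eq' Finset.univ s (fun _ => π s), if_pos (Finset.mem_univ s), heig s,
    sub_self]
end

section
/- Suppose (S_k^*, I_k^*, D_k^*)_{k∈K} with Θ_k^* = Σ_s q_{ks}(I_s^*+D_s^*) > 0 is a steady state of the no-strain coinfection model, i.e. r_k(1−S_k^*) − β_k S_k^* Θ_k^* + γ_k(I_k^*+D_k^*) = 0, β_k S_k^* Θ_k^* − σ_k β_k I_k^* Θ_k^* − (γ_k+r_k) I_k^* = 0, and σ_k β_k I_k^* Θ_k^* − (r_k+γ_k) D_k^* = 0 for all k. Then for every z = (z^1,…,z^N) in the simplex Σ^N, the point given by S_k = S_k^*, I_k^i = z^i I_k^*, D_k^{ij} = z^i z^j D_k^* is an equilibrium of the neutral N-strain coinfection system: with Θ_k^i = Σ_s q_{ks}( I_s^i + (1/2)Σ_j (D_s^{ij}+D_s^{ji}) ), the right-hand sides r_k(1−S_k) + Σ_i γ_k I_k^i + Σ_{i,j} γ_k D_k^{ij} − S_k Σ_i β_k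 Θ_k^i, β_k S_k Θ_k^i − I_k^i Σ_j β_k σ_k Θ_k^j − (r_k+γ_k) I_k^i, and β_k σ_k Θ_k^j I_k^i − (r_k+γ_k) D_k^{ij} all vanish. In particular the set { (S_k^*, I_k^* z^i, D_k^* z^i z^j)_{k∈K} : z ∈ Σ^N } is invariant under the neutral N-strain dynamics. -/
open Matrix

/-- Invariance of the slice `{(S*, z^i I*, z^i z^j D*) : z ∈ Σ^N}` under the
neutral N-strain coinfection dynamics: at any such point all right-hand sides
of the neutral system vanish. -/
theorem neutral_slice_is_equilibrium {K : Type*} [Fintype K] [Nonempty K]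
    (N : ℕ) (hN : 1 ≤ N)
    (β r γ σ : K → ℝ) (hβ : ∀ k, 0 < β k) (hr : ∀ k, 0 < r k)
    (hγ : ∀ k, 0 < γ k) (hσ : ∀ k, 0 < σ k)
    (Q : Matrix K K ℝ) (hQ : ∀ k s, 0 ≤ Q k s)
    (Sstar Istar Dstar Θstar : K → ℝ)
    (hΘstar : ∀ k, Θstar k = ∑ s, Q k s * (Istar s + Dstar s))
    (hΘpos : ∀ k, 0 < Θstar k)
    (heq1 : ∀ k, r k * (1 - Sstar k) - β k * Sstar k * Θstar k +
      γ k * (Istar k + Dstar k) = 0)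
    (heq2 : ∀ k, β k * Sstar k * Θstar k - σ k * β k * Istar k * Θstar k -
      (γ k + r k) * Istar k = 0)
    (heq3 : ∀ k, σ k * β k * Istar k * Θstar k - (r k + γ k) * Dstar k = 0)
    (z : Fin N → ℝ) (hz : ∀ i, 0 ≤ z i) (hz1 : ∑ i, z i = 1)
    (S : K → ℝ) (I : K → Fin N → ℝ) (D : K → Fin N → Fin N → ℝ)
    (hS : ∀ k, S k = Sstar k)
    (hI : ∀ k i, I k i = z i * Istar k)
    (hD : ∀ k i j, D k i j = z i * z j * Dstar k)
    (Θi : K → Fin N → ℝ)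
    (hΘi : ∀ k i, Θi k i = ∑ s, Q k s *
      (I s i + (1/2) * ∑ j, (D s i j + D s j i))) :
    (∀ k, r k * (1 - S k) + (∑ i, γ k * I k i) + (∑ i, ∑ j, γ k * D k i j)
      - S k * ∑ i, β k * Θi k i = 0) ∧
    (∀ k i, β k * S k * Θi k i - I k i * (∑ j, β k * σ k * Θi k j)
      - (r k + γ k) * I k i = 0) ∧
    (∀ k i j, β k * σ k * Θi k j * I k i - (r k + γ k) * D k i j = 0) := by
  have hsum : ∀ c : ℝ, ∑ i, z i * c = c := fun c => by
    rw [← Finset.sum_mul, hz1, one_mul]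
  have hΘ : ∀ k i, Θi k i = z i * Θstar k := by
    intro k i
    rw [hΘi, hΘstar, Finset.mul_sum]
    refine Finset.sum_congr rfl fun s _ => ?_
    have hd : ∑ j, (D s i j + D s j i) = 2 * (z i * Dstar s) := by
      calc ∑ j, (D s i j + D s j i) = ∑ j, z j * (2 * (z i * Dstar s)) := by
            refine Finset.sum_congr rfl fun j _ => ?_
            rw [hD, hD]; ring
        _ = 2 * (z i * Dstar s) := hsum _
    rw [hI, hd]; ring
  refine ⟨?_, ?_, ?_⟩
  · intro k
    have h1 : ∑ i, γ k * I k i = γ k * Istar k := by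
      calc ∑ i, γ k * I k i = ∑ i, z i * (γ k * Istar k) := by
            refine Finset.sum_congr rfl fun i _ => ?_; rw [hI]; ring
        _ = _ := hsum _
    have h2 : ∑ i, ∑ j, γ k * D k i j = γ k * Dstar k := by
      calc ∑ i, ∑ j, γ k * D k i j = ∑ i, z i * (γ k * Dstar k) := by
            refine Finset.sum_congr rfl fun i _ => ?_
            calc ∑ j, γ k * D k i j = ∑ j, z j * (z i * (γ k * Dstar k)) := by
                  refine Finset.sum_congr rfl fun j _ => ?_; rw [hD]; ring
              _ = _ := hsum _
        _ = _ := hsum _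
    have h3 : ∑ i, β k * Θi k i = β k * Θstar k := by
      calc ∑ i, β k * Θi k i = ∑ i, z i * (β k * Θstar k) := by
            refine Finset.sum_congr rfl fun i _ => ?_; rw [hΘ]; ring
        _ = _ := hsum _
    rw [hS, h1, h2, h3]
    linear_combination heq1 k
  · intro k i
    have h3 : ∑ j, β k * σ k * Θi k j = β k * σ k * Θstar k := by
      calc ∑ j, β k * σ k * Θi k j = ∑ j, z j * (β k * σ k * Θstar k) := by
            refine Finset.sum_congr rfl fun j _ => ?_; rw [hΘ]; ring
        _ = _ := hsum _
    rw [hS, hI, hΘ, h3]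
    linear_combination z i * heq2 k
  · intro k i j
    rw [hI, hD, hΘ]
    linear_combination (z i * z j) * heq3 k
end

section
/- Assume the deviation coefficients are independent of the host class: b_k^i = b^i, c_k^i = c^i, c_k^{ij} = c^{ij}, α_k^{ij} = α^{ij}, w_k^{ij} = w^{ij} for all k ∈ K. Then the pairwise invasion fitness λ_i^j = 𝒳^* Σ_{k∈K} (π_k/(r_k+γ_k)) Y_k^{ij}, with Y_k^{ij} = Θ_k^* S_k^* (b^i−b^j) − (1−ξ_k^*/2) I_k^* (c^i−c^j) − D_k^* ((c^{ij}+c^{ji})/2 − c^{jj}) + β_k σ_k I_k^* Θ_k^* (w^{ij}−w^{ji}) + (1/2) β_k Θ_k^* I_k^* ξ_k^* ((α^{ji}−α^{jj}) + μ_k (α^{ji}−α^{ij})), equals Ξ_1 (b^i−b^j) + Ξ_2 (c^j−c^i) + Ξ_3 (c^{jj} − (c^{ij}+c^{ji})/2) + Ξ_4 (w^{ij}−w^{ji}) + Ξ_5 ( α^{ji}−α^{jj} + μ (α^{ji}−α^{ij}) ), where Ξ_1 = 𝒳^* Σ_k π_k Θ_k^* R_k S_k^*/β_k, Ξ_2 =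 𝒳^* Σ_k (π_k R_k/β_k)(1 − D_k^*/(2T_k^*)) I_k^*, Ξ_3 = 𝒳^* Σ_k (π_k R_k/β_k) D_k^*, Ξ_4 = 𝒳^* Σ_k π_k Θ_k^* R_k σ_k I_k^*, Ξ_5 = (1/2) 𝒳^* Σ_k π_k Θ_k^* R_k I_k^* D_k^*/T_k^*, and μ = Σ_k h_k μ_k with weights h_k = π_k Θ_k^* R_k (I_k^* D_k^*/T_k^*) / Σ_s π_s Θ_s^* R_s (I_s^* D_s^*/T_s^*). -/
open Matrix

set_option maxHeartbeats 1000000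

/-- Host-independent perturbations: the pairwise invasion fitness `λ_i^j`
reduces to the weighted form
`Ξ₁(bⁱ−bʲ) + Ξ₂(cʲ−cⁱ) + Ξ₃(cʲʲ−(cⁱʲ+cʲⁱ)/2) + Ξ₄(wⁱʲ−wʲⁱ) + Ξ₅(αʲⁱ−αʲʲ+μ(αʲⁱ−αⁱʲ))`. -/
theorem host_independent_fitness_reduction {K : Type*} [Fintype K] [DecidableEq K] [Nonempty K]
    (N : ℕ) (hN : 1 ≤ N)
    (β r γ σ : K → ℝ) (hβ : ∀ k, 0 < β k) (hr : ∀ k, 0 < r k)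
    (hγ : ∀ k, 0 < γ k) (hσ : ∀ k, 0 < σ k)
    (R : K → ℝ) (hR : ∀ k, R k = β k / (r k + γ k))
    (Q : Matrix K K ℝ) (hQ0 : ∀ k s, 0 ≤ Q k s)
    (hQirr : ∀ k s, ∃ n : ℕ, 1 ≤ n ∧ 0 < (Q ^ n) k s)
    (hQrow : ∀ k, ∑ s, Q k s = 1)
    (Sstar Istar Dstar Tstar Θstar : K → ℝ)
    (hTstar : ∀ k, Tstar k = Istar k + Dstar k)
    (hIpos : ∀ k, 0 < Istar k) (hDpos : ∀ k, 0 < Dstar k)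
    (hTpos : ∀ k, 0 < Tstar k) (hΘpos : ∀ k, 0 < Θstar k)
    (hΘstar : ∀ k, Θstar k = ∑ s, Q k s * Tstar s)
    (heq1 : ∀ k, β k * Sstar k * Θstar k = (r k + γ k) * Tstar k)
    (heq2 : ∀ k, σ k * β k * Istar k * Θstar k = (r k + γ k) * Dstar k)
    (π : K → ℝ) (hπpos : ∀ k, 0 < π k) (hπsum : ∑ k, π k = 1)
    (hπeig : Matrix.vecMul π (Matrix.diagonal (fun k => R k * Sstar k) * Q) = π)
    (ξ μc : K → ℝ)
    (hξ : ∀ k, ξ k = Dstar k / Tstar k)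
    (hμc : ∀ k, μc k = Istar k / Dstar k)
    (𝒳 : ℝ)
    (h𝒳 : 𝒳 = (∑ k, π k / (r k + γ k) * (Tstar k - (1/2) * ξ k * Istar k))⁻¹)
    -- host-class–independent strain deviations
    (b c : Fin N → ℝ) (cc α w : Fin N → Fin N → ℝ)
    (Ξ₁ Ξ₂ Ξ₃ Ξ₄ Ξ₅ μ : ℝ)
    (hΞ₁ : Ξ₁ = 𝒳 * ∑ k, π k * Θstar k * R k * Sstar k / β k)
    (hΞ₂ : Ξ₂ = 𝒳 * ∑ k, π k * R k / β k * (1 - Dstar k / (2 * Tstar k)) * Istar k)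
    (hΞ₃ : Ξ₃ = 𝒳 * ∑ k, π k * R k / β k * Dstar k)
    (hΞ₄ : Ξ₄ = 𝒳 * ∑ k, π k * Θstar k * R k * σ k * Istar k)
    (hΞ₅ : Ξ₅ = (1/2) * 𝒳 * ∑ k, π k * Θstar k * R k * (Istar k * Dstar k / Tstar k))
    (hμ : μ = ∑ k, (π k * Θstar k * R k * (Istar k * Dstar k / Tstar k) /
      (∑ s, π s * Θstar s * R s * (Istar s * Dstar s / Tstar s))) * μc k) :
    ∀ i j : Fin N,
      𝒳 * (∑ k, π k / (r k + γ k) *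
        (Θstar k * Sstar k * (b i - b j)
          - (1 - ξ k / 2) * Istar k * (c i - c j)
          - Dstar k * ((cc i j + cc j i) / 2 - cc j j)
          + β k * σ k * Istar k * Θstar k * (w i j - w j i)
          + (1/2) * β k * Θstar k * Istar k * ξ k *
              ((α j i - α j j) + μc k * (α j i - α i j))))
      = Ξ₁ * (b i - b j) + Ξ₂ * (c j - c i)
        + Ξ₃ * (cc j j - (cc i j + cc j i) / 2)
        + Ξ₄ * (w i j - w j i)
        + Ξ₅ * (α j i - α j j + μ * (α j i - α i j)) := by

  intro i j
  have hrγ : ∀ k, (0:ℝ) < r k + γ k := fun k => add_pos (hr k) (hγ k)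
  have hSpos : (0:ℝ) < ∑ s, π s * Θstar s * R s * (Istar s * Dstar s / Tstar s) := by
    apply Finset.sum_pos _ Finset.univ_nonempty
    intro k _
    have hRk : 0 < R k := by rw [hR]; exact div_pos (hβ k) (hrγ k)
    have h1 := hπpos k; have h2 := hΘpos k; have h3 := hIpos k
    have h4 := hDpos k; have h5 := hTpos k
    positivity
  have hμ' : (∑ k, π k * Θstar k * R k * (Istar k * Dstar k / Tstar k) * μc k)
      = μ * ∑ s, π s * Θstar s * R s * (Istar s * Dstar s / Tstar s) := by
    rw [hμ, Finset.sum_mul]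
    refine Finset.sum_congr rfl fun k _ => ?_
    rw [div_mul_eq_mul_div, div_mul_cancel₀ _ hSpos.ne']
  have hterm : ∀ k, π k / (r k + γ k) *
        (Θstar k * Sstar k * (b i - b j)
          - (1 - ξ k / 2) * Istar k * (c i - c j)
          - Dstar k * ((cc i j + cc j i) / 2 - cc j j)
          + β k * σ k * Istar k * Θstar k * (w i j - w j i)
          + (1/2) * β k * Θstar k * Istar k * ξ k *
              ((α j i - α j j) + μc k * (α j i - α i j)))
      = π k * Θstar k * R k * Sstar k / β k * (b i - b j)
        + π k * R k / β k * (1 - Dstar k / (2 * Tstar k)) * Istar k * (c j - c i)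
        + π k * R k / β k * Dstar k * (cc j j - (cc i j + cc j i) / 2)
        + π k * Θstar k * R k * σ k * Istar k * (w i j - w j i)
        + (π k * Θstar k * R k * (Istar k * Dstar k / Tstar k)) * ((1/2) * (α j i - α j j))
        + (π k * Θstar k * R k * (Istar k * Dstar k / Tstar k) * μc k)
            * ((1/2) * (α j i - α i j)) := by
    intro k
    have h1 := (hrγ k).ne'
    have h2 := (hβ k).ne'
    have h3 := (hTpos k).ne'
    rw [hR, hξ]
    field_simp
    ring
  rw [Finset.sum_congr rfl fun k _ => hterm k]
  simp only [Finset.sum_add_distrib, ← Finset.sum_mul]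
  rw [hΞ₁, hΞ₂, hΞ₃, hΞ₄, hΞ₅, hμ']
  ring
end

section
/- Let q_A, q_B > 0 with q_A + q_B = 1, and let R_A, R_B > 0 satisfy q_A R_A + q_B R_B > 1. Then the quantity Θ^* = (1/2)·( 1 − 1/R_A − 1/R_B + sqrt( q_A (1 − 1/R_A + 1/R_B)^2 + q_B (1 − 1/R_B + 1/R_A)^2 ) ) lies in (0,1) and satisfies the implicit endemic equation q_A R_A/(1+R_A Θ^*) + q_B R_B/(1+R_B Θ^*) = 1. -/
/-!
Writing `a = 1/R_A`, `b = 1/R_B`, the endemic equation reads `q_A/(a+Θ) + q_B/(b+Θ) = 1`, i.e.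
`Θ² + (a+b-1)Θ + (ab - q_A b - q_B a) = 0`, and `Θ*` is the larger root of this monic quadratic
(its discriminant is the expression under the square root once `q_A + q_B = 1`).
The condition `q_A R_A + q_B R_B > 1` makes the constant term negative, so the roots straddle `0`,
and the quadratic is positive at `1`, so the larger root lies below `1`.
-/

noncomputable def quadRoot (p c : ℝ) : ℝ := (-p + Real.sqrt (p ^ 2 - 4 * c)) / 2

section quadRoot

variable {p c : ℝ}

lemma quadRoot_isRoot (hdisc : 0 ≤ p ^ 2 - 4 * c) :
    quadRoot p c ^ 2 + p * quadRoot p c + c = 0 := by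
  have hsq := Real.sq_sqrt hdisc
  unfold quadRoot
  linear_combination hsq / 4

lemma quadRoot_pos (hc : c < 0) : 0 < quadRoot p c := by
  have hlt : Real.sqrt (p ^ 2) < Real.sqrt (p ^ 2 - 4 * c) :=
    Real.sqrt_lt_sqrt (sq_nonneg p) (by linarith)
  rw [Real.sqrt_sq_eq_abs] at hlt
  unfold quadRoot
  linarith [le_abs_self p]

/-- The other root `-p - r` is `c / r < 0 ≤ x`, and the quadratic at `x` factors as
`(x - r) (x + p + r)`. -/
lemma quadRoot_lt {x : ℝ} (hc : c < 0) (hx : 0 ≤ x) (hfx : 0 < x ^ 2 + p * x + c) :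
    quadRoot p c < x := by
  set r := quadRoot p c
  have hr : 0 < r := quadRoot_pos hc
  have hroot : r ^ 2 + p * r + c = 0 := quadRoot_isRoot (by nlinarith)
  have hother : 0 < x + p + r := by nlinarith
  have hfactor : x ^ 2 + p * x + c = (x - r) * (x + p + r) := by linear_combination hroot
  nlinarith

end quadRoot

lemma mul_div_one_add_mul_eq (q : ℝ) {R : ℝ} (hR : R ≠ 0) (t : ℝ) :
    q * R / (1 + R * t) = q / (1 / R + t) := by
  rw [← mul_div_mul_left q (1 / R + t) hR, mul_add, mul_one_div_cancel hR, mul_comm]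

lemma weighted_inv_sum_eq_one_of_isRoot {qA qB a b t : ℝ} (hq : qA + qB = 1)
    (ha : a + t ≠ 0) (hb : b + t ≠ 0)
    (hroot : t ^ 2 + (a + b - 1) * t + (a * b - qA * b - qB * a) = 0) :
    qA / (a + t) + qB / (b + t) = 1 := by
  rw [div_add_div _ _ ha hb, div_eq_one_iff_eq (mul_ne_zero ha hb)]
  linear_combination -hroot + t * hq

lemma inv_mul_inv_lt_of_one_lt_weighted {qA qB RA RB : ℝ} (hRA : 0 < RA) (hRB : 0 < RB)
    (hR0 : 1 < qA * RA + qB * RB) :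
    1 / RA * (1 / RB) < qA * (1 / RB) + qB * (1 / RA) := by
  have hrw : qA * (1 / RB) + qB * (1 / RA) = (qA * RA + qB * RB) * (1 / RA * (1 / RB)) := by
    field_simp
  rw [hrw]
  exact lt_mul_of_one_lt_left (by positivity) hR0

/-- Explicit endemic prevalence for the two-class SIS coinfection model:
the explicit `Θ*` lies in `(0,1)` and solves the implicit endemic equation. -/
theorem two_class_explicit_theta
    (qA qB RA RB : ℝ) (hqA : 0 < qA) (hqB : 0 < qB) (hq : qA + qB = 1)
    (hRA : 0 < RA) (hRB : 0 < RB)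
    (hR0 : 1 < qA * RA + qB * RB)
    (Θ : ℝ)
    (hΘ : Θ = (1/2) * (1 - 1/RA - 1/RB +
      Real.sqrt (qA * (1 - 1/RA + 1/RB)^2 + qB * (1 - 1/RB + 1/RA)^2))) :
    Θ ∈ Set.Ioo (0:ℝ) 1 ∧
    qA * RA / (1 + RA * Θ) + qB * RB / (1 + RB * Θ) = 1 := by
  have hc := inv_mul_inv_lt_of_one_lt_weighted hRA hRB hR0
  rw [mul_div_one_add_mul_eq qA hRA.ne', mul_div_one_add_mul_eq qB hRB.ne']
  set a := 1 / RA
  set b := 1 / RB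
  have ha : 0 < a := by positivity
  have hb : 0 < b := by positivity
  have hΘ_eq : Θ = quadRoot (a + b - 1) (a * b - qA * b - qB * a) := by
    rw [hΘ, quadRoot]
    have hdisc : qA * (1 - a + b) ^ 2 + qB * (1 - b + a) ^ 2
        = (a + b - 1) ^ 2 - 4 * (a * b - qA * b - qB * a) := by
      linear_combination ((1 - a - b) ^ 2 - 4 * a * b) * hq
    rw [hdisc]
    ring
  have hroot : Θ ^ 2 + (a + b - 1) * Θ + (a * b - qA * b - qB * a) = 0 := by
    rw [hΘ_eq]
    exact quadRoot_isRoot (by nlinarith)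
  have hpos : 0 < Θ := hΘ_eq ▸ quadRoot_pos (by linarith)
  have hlt : Θ < 1 := hΘ_eq ▸ quadRoot_lt (by linarith) zero_le_one
    (by nlinarith [mul_pos hqA ha, mul_pos hqB hb])
  exact ⟨⟨hpos, hlt⟩, weighted_inv_sum_eq_one_of_isRoot hq (by positivity) (by positivity) hroot⟩
end

section
/- Let K be a finite set of positive integers and p = (p_k)_{k∈K} a probability vector which is not concentrated on a single degree (there exist k ≠ k' with p_k > 0 and p_{k'} > 0). Let ρ > 0 and suppose Θ_N ∈ (0,1) satisfies ρ Σ_{k∈K} k² p_k/(1+ρ k Θ_N) = Σ_{k∈K} k p_k. Set Θ_{N₀} = max(0, 1 − 1/(ρ E_p(k))), where E_p(k) = Σ_k k p_k. Then Θ_{N₀} < Θ_N: the endemic infection probability on the heterogeneous network is strictly larger than on the homogeneous network with the same mean connectivity. -/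
/-!
Let `μ = E_p(k)` and `c = ρ Θ_N`. The map `x ↦ x² / (1 + c x)` lies above its tangent at `μ`
with gap `(x - μ)² / ((1 + c x)(1 + c μ)²)`, so (strict Jensen) its mean over a non-degenerate
degree distribution exceeds its value at `μ`. The fixed-point equation says that this mean is
`μ / ρ`, hence `ρ μ² / (1 + ρ Θ_N μ) < μ`, i.e. `1 - 1 / (ρ μ) < Θ_N`.
-/

open Finset

theorem lt_sum_mul_of_supporting_line {ι : Type*} {s : Finset ι} {w x : ι → ℝ} {f : ℝ → ℝ}
    {μ m : ℝ} (hw : ∀ i ∈ s, 0 ≤ w i) (hw1 : ∑ i ∈ s, w i = 1) (hμ : ∑ i ∈ s, x i * w i = μ)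
    (hle : ∀ i ∈ s, f μ + m * (x i - μ) ≤ f (x i))
    (hlt : ∃ i ∈ s, 0 < w i ∧ f μ + m * (x i - μ) < f (x i)) :
    f μ < ∑ i ∈ s, f (x i) * w i := by
  have hline : ∑ i ∈ s, (f μ + m * (x i - μ)) * w i = f μ := by
    simp only [add_mul, mul_assoc, sub_mul, sum_add_distrib, sum_sub_distrib, ← mul_sum,
      hw1, hμ]
    ring
  obtain ⟨j, hj, hwj, hltj⟩ := hlt
  calc f μ = ∑ i ∈ s, (f μ + m * (x i - μ)) * w i := hline.symm
    _ < ∑ i ∈ s, f (x i) * w i :=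
      sum_lt_sum (fun i hi => mul_le_mul_of_nonneg_right (hle i hi) (hw i hi))
        ⟨j, hj, mul_lt_mul_of_pos_right hltj hwj⟩

theorem sq_div_one_add_mul_sub_tangent {c μ x : ℝ} (hμ : 1 + c * μ ≠ 0) (hx : 1 + c * x ≠ 0) :
    x ^ 2 / (1 + c * x) - (μ ^ 2 / (1 + c * μ) + (2 * μ + c * μ ^ 2) / (1 + c * μ) ^ 2 * (x - μ))
      = (x - μ) ^ 2 / ((1 + c * x) * (1 + c * μ) ^ 2) := by
  rw [div_mul_eq_mul_div, div_add_div _ _ hμ (pow_ne_zero 2 hμ), div_sub_div _ _ hx (by positivity),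
    div_eq_div_iff (by positivity) (by positivity)]
  ring

theorem exists_pos_ne_of_two_pos {K : Finset ℕ} {p : ℕ → ℝ}
    (hhet : ∃ k ∈ K, ∃ k' ∈ K, k ≠ k' ∧ 0 < p k ∧ 0 < p k') (μ : ℝ) :
    ∃ k ∈ K, 0 < p k ∧ (k : ℝ) ≠ μ := by
  obtain ⟨k, hk, k', hk', hne, hpk, hpk'⟩ := hhet
  by_cases hkμ : (k : ℝ) = μ
  · exact ⟨k', hk', hpk', fun hk'μ => hne (by exact_mod_cast hkμ.trans hk'μ.symm)⟩
  · exact ⟨k, hk, hpk, hkμ⟩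

theorem sum_mul_pos_of_two_pos {K : Finset ℕ} {p : ℕ → ℝ} (hp : ∀ k ∈ K, 0 ≤ p k)
    (hhet : ∃ k ∈ K, ∃ k' ∈ K, k ≠ k' ∧ 0 < p k ∧ 0 < p k') :
    0 < ∑ k ∈ K, (k : ℝ) * p k := by
  obtain ⟨k, hk, hpk, hk0⟩ := exists_pos_ne_of_two_pos hhet 0
  exact sum_pos' (fun i hi => mul_nonneg i.cast_nonneg (hp i hi))
    ⟨k, hk, mul_pos (lt_of_le_of_ne k.cast_nonneg hk0.symm) hpk⟩

theorem sq_div_one_add_mul_mean_lt {K : Finset ℕ} {p : ℕ → ℝ} (hp : ∀ k ∈ K, 0 ≤ p k)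
    (hpsum : ∑ k ∈ K, p k = 1) (hhet : ∃ k ∈ K, ∃ k' ∈ K, k ≠ k' ∧ 0 < p k ∧ 0 < p k')
    {c : ℝ} (hc : 0 ≤ c) :
    (∑ k ∈ K, (k : ℝ) * p k) ^ 2 / (1 + c * ∑ k ∈ K, (k : ℝ) * p k)
      < ∑ k ∈ K, (k : ℝ) ^ 2 / (1 + c * k) * p k := by
  set μ := ∑ k ∈ K, (k : ℝ) * p k
  have hμ : 0 < 1 + c * μ := by positivity [sum_mul_pos_of_two_pos hp hhet]
  have hgap (k : ℕ) := sq_div_one_add_mul_sub_tangent (c := c) (x := k) hμ.ne' (by positivity)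
  refine lt_sum_mul_of_supporting_line (f := fun x => x ^ 2 / (1 + c * x))
    (m := (2 * μ + c * μ ^ 2) / (1 + c * μ) ^ 2) hp hpsum rfl
    (fun k _ => ?_) ?_
  · have : 0 ≤ ((k : ℝ) - μ) ^ 2 / ((1 + c * k) * (1 + c * μ) ^ 2) := by positivity
    linarith [hgap k]
  · obtain ⟨k, hk, hpk, hkμ⟩ := exists_pos_ne_of_two_pos hhet μ
    have : 0 < ((k : ℝ) - μ) ^ 2 / ((1 + c * k) * (1 + c * μ) ^ 2) := by
      have := sub_ne_zero.mpr hkμ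
      positivity
    exact ⟨k, hk, hpk, by linarith [hgap k]⟩

theorem one_sub_one_div_lt_of_mul_sq_div_lt {ρ μ Θ : ℝ} (hρ : 0 < ρ) (hμ : 0 < μ) (hΘ : 0 ≤ Θ)
    (h : ρ * (μ ^ 2 / (1 + ρ * Θ * μ)) < μ) : 1 - 1 / (ρ * μ) < Θ := by
  have hd : 0 < 1 + ρ * Θ * μ := by positivity
  rw [mul_div_assoc', div_lt_iff₀ hd] at h
  have h' : ρ * μ < 1 + ρ * Θ * μ := by nlinarith
  rw [sub_lt_iff_lt_add, ← sub_lt_iff_lt_add', lt_div_iff₀ (by positivity)]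
  linarith

theorem network_heterogeneity_raises_theta_general
    (K : Finset ℕ)
    (p : ℕ → ℝ) (hp : ∀ k ∈ K, 0 ≤ p k) (hpsum : ∑ k ∈ K, p k = 1)
    (hhet : ∃ k ∈ K, ∃ k' ∈ K, k ≠ k' ∧ 0 < p k ∧ 0 < p k')
    (ρ : ℝ) (hρ : 0 < ρ)
    (ΘN : ℝ) (hΘN : ΘN ∈ Set.Ioo (0:ℝ) 1)
    (hfix : ρ * ∑ k ∈ K, (k:ℝ)^2 * p k / (1 + ρ * (k:ℝ) * ΘN) = ∑ k ∈ K, (k:ℝ) * p k)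
    (ΘN0 : ℝ)
    (hΘN0 : ΘN0 = max 0 (1 - 1 / (ρ * ∑ k ∈ K, (k:ℝ) * p k))) :
    ΘN0 < ΘN := by
  have hjensen := sq_div_one_add_mul_mean_lt hp hpsum hhet (c := ρ * ΘN) (by positivity [hΘN.1])
  have hsum : ∑ k ∈ K, (k : ℝ) ^ 2 / (1 + ρ * ΘN * k) * p k
      = ∑ k ∈ K, (k : ℝ) ^ 2 * p k / (1 + ρ * k * ΘN) :=
    sum_congr rfl fun k _ => by rw [div_mul_eq_mul_div, mul_right_comm]
  rw [hsum] at hjensen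
  have hlt := one_sub_one_div_lt_of_mul_sq_div_lt hρ (sum_mul_pos_of_two_pos hp hhet) hΘN.1.le
    ((mul_lt_mul_of_pos_left hjensen hρ).trans_eq hfix)
  exact hΘN0 ▸ max_lt hΘN.1 hlt

/-- On a heterogeneous host contact network, the endemic infection probability
is strictly larger than on the homogeneous network with the same mean
connectivity. -/
theorem network_heterogeneity_raises_theta
    (K : Finset ℕ) (hK : ∀ k ∈ K, 0 < k)
    (p : ℕ → ℝ) (hp : ∀ k ∈ K, 0 ≤ p k) (hpsum : ∑ k ∈ K, p k = 1)
    (hhet : ∃ k ∈ K, ∃ k' ∈ K, k ≠ k' ∧ 0 < p k ∧ 0 < p k')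
    (ρ : ℝ) (hρ : 0 < ρ)
    (ΘN : ℝ) (hΘN : ΘN ∈ Set.Ioo (0:ℝ) 1)
    (hfix : ρ * ∑ k ∈ K, (k:ℝ)^2 * p k / (1 + ρ * (k:ℝ) * ΘN) = ∑ k ∈ K, (k:ℝ) * p k)
    (ΘN0 : ℝ)
    (hΘN0 : ΘN0 = max 0 (1 - 1 / (ρ * ∑ k ∈ K, (k:ℝ) * p k))) :
    ΘN0 < ΘN :=
  network_heterogeneity_raises_theta_general K p hp hpsum hhet ρ hρ ΘN hΘN hfix ΘN0 hΘN0
end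

section
/- Let K be a finite set of positive integers, p = (p_k)_{k∈K} a probability vector, σ > 0, ρ > 0 with ρ E_p(k) > 1, and let Θ^* ∈ (0,1) satisfy ρ Σ_{k∈K} k² p_k/(1+ρ k Θ^*) = E_p(k). Define μ(N) = (1/(σρΘ^*)) Σ_{k∈K} h_k/k where h_k = p_k k⁴/((1+σkρΘ^*)²(1+ρkΘ^*)) / Σ_{s∈K} p_s s⁴/((1+σsρΘ^*)²(1+ρsΘ^*)), and define μ(N₀) = 1/(σ(ρ E_p(k) − 1)), the corresponding quantity for the homogeneous network with constant connectivity E_p(k). Then μ(N) ≤ μ(N₀), with equality if and only if p is concentrated on a single degree; in particular, if p gives positive mass to at least two distinct degrees, then μ(N) < μ(N₀). -/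
/-!
Put `u k = k³ / ((1 + σρΘk)² (1 + ρΘk))` (`coinfectionWeight`) and `E = ∑ k p_k`. Then `h_k / k`
is proportional to `p_k u_k` with normalising sum `∑ p_k k u_k`, so `μ(N) ≤ μ(N₀)` reads
`(ρE - 1) ∑ p_k u_k ≤ ρΘ ∑ p_k k u_k`. Two inequalities give this:
* Chebyshev's sum inequality, as `k` and `u k` increase together: `E ∑ p_k u_k ≤ ∑ p_k k u_k`;
* Cauchy–Schwarz with weights `p_k (1 + ρΘk)`, combined with the endemic equation:
  `E² ≤ (1 + ρΘE) ∑ p_k k² / (1 + ρΘk) = (1 + ρΘE) E / ρ`, that is `ρE - 1 ≤ ρΘE`.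
Cauchy–Schwarz is an equality only if `k / (1 + ρΘk)`, hence `k`, is constant on the support
of `p`; for a point mass Chebyshev's inequality is an equality as well.
-/

open Finset

namespace Finset

variable {ι R : Type*}

theorem sum_sum_mul_mul_sub_mul_sub [CommRing R] (s : Finset ι) (w f g : ι → R) :
    ∑ i ∈ s, ∑ j ∈ s, w i * w j * ((f i - f j) * (g i - g j)) =
      2 * ((∑ i ∈ s, w i) * ∑ i ∈ s, w i * (f i * g i) -
        (∑ i ∈ s, w i * f i) * ∑ i ∈ s, w i * g i) := by
  set A : ι → ι → R := fun i j => w i * w j * (f j * g j - f i * g j)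
  have hsplit : ∀ i j, w i * w j * ((f i - f j) * (g i - g j)) = A i j + A j i :=
    fun i j => by simp only [A]; ring
  simp_rw [hsplit, sum_add_distrib]
  rw [sum_comm (f := fun i j => A j i), ← two_mul, sum_mul_sum, sum_mul_sum, ← sum_sub_distrib]
  congr 1
  refine sum_congr rfl fun i _ => ?_
  rw [← sum_sub_distrib]
  exact sum_congr rfl fun j _ => by simp only [A]; ring

theorem sum_mul_eq_sum_mul_of_ne_zero_imp_eq [Semiring R] {s : Finset ι} {w f : ι → R} {i₀ : ι}
    (h : ∀ i ∈ s, w i ≠ 0 → i = i₀) :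
    ∑ i ∈ s, w i * f i = (∑ i ∈ s, w i) * f i₀ := by
  rw [sum_mul]
  refine sum_congr rfl fun i hi => ?_
  by_cases hwi : w i = 0
  · simp [hwi]
  · rw [h i hi hwi]

theorem sum_mul_mul_eq_of_ne_zero_imp_eq [CommSemiring R] {s : Finset ι} {w f g : ι → R} {i₀ : ι}
    (h : ∀ i ∈ s, w i ≠ 0 → i = i₀) (hw : ∑ i ∈ s, w i = 1) :
    ∑ i ∈ s, w i * (f i * g i) = (∑ i ∈ s, w i * f i) * ∑ i ∈ s, w i * g i := by
  simp only [sum_mul_eq_sum_mul_of_ne_zero_imp_eq h, hw, one_mul]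

variable [CommRing R] [LinearOrder R] [IsStrictOrderedRing R] {s : Finset ι} {w f g : ι → R}

theorem _root_.MonovaryOn.sum_mul_sum_le_sum_mul_sum_mul (hfg : MonovaryOn f g s)
    (hw : ∀ i ∈ s, 0 ≤ w i) :
    (∑ i ∈ s, w i * f i) * ∑ i ∈ s, w i * g i ≤ (∑ i ∈ s, w i) * ∑ i ∈ s, w i * (f i * g i) := by
  have hpairs : 0 ≤ ∑ i ∈ s, ∑ j ∈ s, w i * w j * ((f i - f j) * (g i - g j)) :=
    sum_nonneg fun i hi => sum_nonneg fun j hj =>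
      mul_nonneg (mul_nonneg (hw i hi) (hw j hj)) (hfg.sub_mul_sub_nonneg hj hi)
  rw [sum_sum_mul_mul_sub_mul_sub] at hpairs
  linarith

theorem sq_sum_mul_le_sum_mul_sum_mul_sq (hw : ∀ i ∈ s, 0 ≤ w i) :
    (∑ i ∈ s, w i * f i) ^ 2 ≤ (∑ i ∈ s, w i) * ∑ i ∈ s, w i * f i ^ 2 := by
  simpa only [sq] using (monovaryOn_self f s).sum_mul_sum_le_sum_mul_sum_mul hw

theorem sq_sum_mul_eq_sum_mul_sum_mul_sq_iff (hw : ∀ i ∈ s, 0 ≤ w i) :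
    (∑ i ∈ s, w i * f i) ^ 2 = (∑ i ∈ s, w i) * ∑ i ∈ s, w i * f i ^ 2 ↔
      ∀ i ∈ s, ∀ j ∈ s, w i ≠ 0 → w j ≠ 0 → f i = f j := by
  have hterm : ∀ i ∈ s, ∀ j ∈ s, 0 ≤ w i * w j * ((f i - f j) * (f i - f j)) :=
    fun i hi j hj => mul_nonneg (mul_nonneg (hw i hi) (hw j hj)) (mul_self_nonneg _)
  have hid : ∑ i ∈ s, ∑ j ∈ s, w i * w j * ((f i - f j) * (f i - f j)) =
      2 * ((∑ i ∈ s, w i) * ∑ i ∈ s, w i * f i ^ 2 - (∑ i ∈ s, w i * f i) ^ 2) := by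
    simp only [sum_sum_mul_mul_sub_mul_sub, sq]
  calc _ ↔ ∑ i ∈ s, ∑ j ∈ s, w i * w j * ((f i - f j) * (f i - f j)) = 0 := by
        constructor <;> intro h <;> linarith
      _ ↔ _ := by
        rw [sum_eq_zero_iff_of_nonneg fun i hi => sum_nonneg (hterm i hi)]
        refine forall₂_congr fun i hi => ?_
        rw [sum_eq_zero_iff_of_nonneg (hterm i hi)]
        refine forall₂_congr fun j hj => ?_
        simp only [mul_eq_zero, sub_eq_zero]
        tauto

end Finset

theorem strictMono_natCast_div_one_add_mul {c : ℝ} (hc : 0 ≤ c) :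
    StrictMono fun k : ℕ => (k : ℝ) / (1 + c * k) := by
  intro m n hmn
  have hmn' : (m : ℝ) < n := by exact_mod_cast hmn
  dsimp only
  rw [div_lt_div_iff₀ (by positivity) (by positivity)]
  linear_combination hmn'

theorem sq_sum_natCast_mul_le_one_add_mul_mul_sum_div (K : Finset ℕ) (p : ℕ → ℝ)
    (hp : ∀ k ∈ K, 0 ≤ p k) (hpsum : ∑ k ∈ K, p k = 1) {c : ℝ} (hc : 0 ≤ c) :
    (∑ k ∈ K, (k : ℝ) * p k) ^ 2 ≤
        (1 + c * ∑ k ∈ K, (k : ℝ) * p k) * ∑ k ∈ K, (k : ℝ) ^ 2 * p k / (1 + c * k) ∧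
      ((∑ k ∈ K, (k : ℝ) * p k) ^ 2 =
          (1 + c * ∑ k ∈ K, (k : ℝ) * p k) * ∑ k ∈ K, (k : ℝ) ^ 2 * p k / (1 + c * k) ↔
        ∃ k₀ ∈ K, ∀ k ∈ K, p k ≠ 0 → k = k₀) := by
  have ha : ∀ k : ℕ, 0 < 1 + c * k := fun k => by positivity
  set v : ℕ → ℝ := fun k => p k * (1 + c * k)
  set F : ℕ → ℝ := fun k => k / (1 + c * k)
  have hv : ∀ k ∈ K, 0 ≤ v k := fun k hk => mul_nonneg (hp k hk) (ha k).le
  have hsum_v : ∑ k ∈ K, v k = 1 + c * ∑ k ∈ K, (k : ℝ) * p k := by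
    simp only [v, mul_add, mul_one, sum_add_distrib, hpsum, mul_sum]
    exact congrArg _ (sum_congr rfl fun k _ => by ring)
  have hsum_vF : ∑ k ∈ K, v k * F k = ∑ k ∈ K, (k : ℝ) * p k :=
    sum_congr rfl fun k _ => by
      simp only [v, F]
      field_simp [(ha k).ne']
  have hsum_vF2 : ∑ k ∈ K, v k * F k ^ 2 = ∑ k ∈ K, (k : ℝ) ^ 2 * p k / (1 + c * k) :=
    sum_congr rfl fun k _ => by
      simp only [v, F]
      field_simp [(ha k).ne']
  rw [← hsum_v, ← hsum_vF, ← hsum_vF2, sq_sum_mul_eq_sum_mul_sum_mul_sq_iff hv]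
  refine ⟨sq_sum_mul_le_sum_mul_sum_mul_sq hv, ?_⟩
  obtain ⟨i, hi, hpi⟩ := exists_ne_zero_of_sum_ne_zero (hpsum ▸ one_ne_zero : ∑ k ∈ K, p k ≠ 0)
  simp only [v, F, mul_ne_zero_iff, ne_eq, (ha _).ne', not_false_eq_true, and_true,
    (strictMono_natCast_div_one_add_mul hc).injective.eq_iff]
  exact ⟨fun h => ⟨i, hi, fun k hk hpk => h k hk i hi hpk hpi⟩,
    fun ⟨k₀, _, h⟩ i hi j hj hpi hpj => (h i hi hpi).trans (h j hj hpj).symm⟩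

theorem mul_sum_sub_one_le_of_endemic (K : Finset ℕ) (p : ℕ → ℝ) (hp : ∀ k ∈ K, 0 ≤ p k)
    (hpsum : ∑ k ∈ K, p k = 1) {ρ Θ : ℝ} (hρ : 0 < ρ) (hΘ : 0 ≤ Θ)
    (hE : 0 < ∑ k ∈ K, (k : ℝ) * p k)
    (hfix : ρ * ∑ k ∈ K, (k : ℝ) ^ 2 * p k / (1 + ρ * k * Θ) = ∑ k ∈ K, (k : ℝ) * p k) :
    ρ * (∑ k ∈ K, (k : ℝ) * p k) - 1 ≤ ρ * Θ * ∑ k ∈ K, (k : ℝ) * p k ∧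
      (ρ * (∑ k ∈ K, (k : ℝ) * p k) - 1 = ρ * Θ * ∑ k ∈ K, (k : ℝ) * p k ↔
        ∃ k₀ ∈ K, ∀ k ∈ K, p k ≠ 0 → k = k₀) := by
  simp_rw [mul_right_comm ρ _ Θ] at hfix
  obtain ⟨hcs, hcs_eq⟩ :=
    sq_sum_natCast_mul_le_one_add_mul_mul_sum_div K p hp hpsum (mul_nonneg hρ.le hΘ)
  set E := ∑ k ∈ K, (k : ℝ) * p k
  set X := ∑ k ∈ K, (k : ℝ) ^ 2 * p k / (1 + ρ * Θ * k)
  have hdefect : (1 + ρ * Θ * E) * X - E ^ 2 = (1 + ρ * Θ * E - ρ * E) * (E / ρ) := by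
    rw [← hfix]
    field_simp
  have hEρ : 0 < E / ρ := div_pos hE hρ
  refine ⟨?_, ?_⟩
  · have := (mul_nonneg_iff_of_pos_right hEρ).1 (hdefect ▸ sub_nonneg.2 hcs)
    linarith
  · rw [← hcs_eq, eq_comm (a := E ^ 2), ← sub_eq_zero (a := (1 + ρ * Θ * E) * X), hdefect,
      mul_eq_zero_iff_right hEρ.ne']
    constructor <;> intro h <;> linarith

noncomputable def coinfectionWeight (σ ρ Θ : ℝ) (k : ℕ) : ℝ :=
  (k : ℝ) ^ 3 / ((1 + σ * k * ρ * Θ) ^ 2 * (1 + ρ * k * Θ))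

section coinfectionWeight

variable {σ ρ Θ : ℝ} {K : Finset ℕ} {p : ℕ → ℝ}

theorem monotone_coinfectionWeight (hσ : 0 ≤ σ) (hρ : 0 ≤ ρ) (hΘ : 0 ≤ Θ) :
    Monotone (coinfectionWeight σ ρ Θ) := by
  have hnonneg : ∀ e : ℝ, 0 ≤ e → ∀ k : ℕ, 0 ≤ (k : ℝ) / (1 + e * k) := fun e he k => by
    positivity
  have hσρΘ : 0 ≤ σ * ρ * Θ := by positivity
  have hρΘ : 0 ≤ ρ * Θ := by positivity
  have hfactor : coinfectionWeight σ ρ Θ =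
      (fun k : ℕ => (k : ℝ) / (1 + σ * ρ * Θ * k)) *
        (fun k : ℕ => (k : ℝ) / (1 + σ * ρ * Θ * k)) * fun k : ℕ => (k : ℝ) / (1 + ρ * Θ * k) := by
    funext k
    simp only [coinfectionWeight, Pi.mul_apply, div_mul_div_comm]
    ring
  have hmono := (strictMono_natCast_div_one_add_mul hσρΘ).monotone
  rw [hfactor]
  exact (hmono.mul hmono (hnonneg _ hσρΘ) (hnonneg _ hσρΘ)).mul
    (strictMono_natCast_div_one_add_mul hρΘ).monotone
    (fun k => mul_nonneg (hnonneg _ hσρΘ k) (hnonneg _ hσρΘ k)) (hnonneg _ hρΘ)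

theorem sum_mul_coinfectionWeight_pos (hσ : 0 ≤ σ) (hρ : 0 ≤ ρ) (hΘ : 0 ≤ Θ)
    (hp : ∀ k ∈ K, 0 ≤ p k) (hE : 0 < ∑ k ∈ K, (k : ℝ) * p k) :
    0 < ∑ k ∈ K, p k * coinfectionWeight σ ρ Θ k := by
  obtain ⟨k, hk, hkp⟩ := exists_lt_of_sum_lt (by simpa using hE : ∑ k ∈ K, (0 : ℝ) < _)
  have hk0 : (0 : ℝ) < k := lt_of_le_of_ne k.cast_nonneg (left_ne_zero_of_mul hkp.ne').symm
  have hpk : 0 < p k := lt_of_le_of_ne (hp k hk) (right_ne_zero_of_mul hkp.ne').symm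
  exact sum_pos' (fun k hk => mul_nonneg (hp k hk) (by unfold coinfectionWeight; positivity))
    ⟨k, hk, mul_pos hpk (div_pos (pow_pos hk0 3) (by positivity))⟩

theorem sum_natCast_mul_mul_sum_coinfectionWeight_le (hσ : 0 ≤ σ) (hρ : 0 ≤ ρ) (hΘ : 0 ≤ Θ)
    (hp : ∀ k ∈ K, 0 ≤ p k) (hpsum : ∑ k ∈ K, p k = 1) :
    (∑ k ∈ K, (k : ℝ) * p k) * ∑ k ∈ K, p k * coinfectionWeight σ ρ Θ k ≤
      ∑ k ∈ K, p k * (k * coinfectionWeight σ ρ Θ k) := by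
  have hcheb := ((Nat.mono_cast.monovary (monotone_coinfectionWeight hσ hρ hΘ)).monovaryOn
    (K : Set ℕ)).sum_mul_sum_le_sum_mul_sum_mul hp
  rwa [hpsum, one_mul, sum_congr rfl fun k _ => mul_comm (p k) (k : ℝ)] at hcheb

end coinfectionWeight

theorem sum_div_natCast_eq_div (K : Finset ℕ) (p : ℕ → ℝ) {σ ρ Θ : ℝ} (h : ℕ → ℝ)
    (hh : ∀ k, h k = (p k * (k : ℝ) ^ 4 / ((1 + σ * k * ρ * Θ) ^ 2 * (1 + ρ * k * Θ))) /
      ∑ s ∈ K, p s * (s : ℝ) ^ 4 / ((1 + σ * s * ρ * Θ) ^ 2 * (1 + ρ * s * Θ))) :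
    ∑ k ∈ K, h k / k = (∑ k ∈ K, p k * coinfectionWeight σ ρ Θ k) /
      ∑ k ∈ K, p k * (k * coinfectionWeight σ ρ Θ k) := by
  have hW : ∑ s ∈ K, p s * (s : ℝ) ^ 4 / ((1 + σ * s * ρ * Θ) ^ 2 * (1 + ρ * s * Θ)) =
      ∑ k ∈ K, p k * (k * coinfectionWeight σ ρ Θ k) :=
    sum_congr rfl fun k _ => by simp only [coinfectionWeight]; ring
  rw [sum_div]
  refine sum_congr rfl fun k _ => ?_
  rw [hh, hW, div_right_comm]
  congr 1
  rcases eq_or_ne (k : ℝ) 0 with hk | hk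
  · simp [coinfectionWeight, hk]
  · simp only [coinfectionWeight]
    field_simp

theorem one_div_mul_div_le_one_div_and_eq_iff {σ c D E S P : ℝ} (hσ : 0 < σ) (hc : 0 < c)
    (hD : 0 < D) (hS : 0 < S) (hDE : D ≤ c * E) (hSP : E * S ≤ P) :
    1 / (σ * c) * (S / P) ≤ 1 / (σ * D) ∧
      (1 / (σ * c) * (S / P) = 1 / (σ * D) ↔ D = c * E ∧ P = E * S) := by
  have hP : 0 < P := (mul_pos (pos_of_mul_pos_right (hD.trans_le hDE) hc.le) hS).trans_le hSP
  have hgap : 1 / (σ * D) - 1 / (σ * c) * (S / P) =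
      (c * (P - E * S) + (c * E - D) * S) / (σ * c * P * D) := by
    field_simp
    ring
  have hSP_gap : 0 ≤ c * (P - E * S) := mul_nonneg hc.le (sub_nonneg.2 hSP)
  have hDE_gap : 0 ≤ (c * E - D) * S := mul_nonneg (sub_nonneg.2 hDE) hS.le
  have hden : 0 < σ * c * P * D := by positivity
  constructor
  · have := div_nonneg (add_nonneg hSP_gap hDE_gap) hden.le
    linarith
  rw [eq_comm, ← sub_eq_zero, hgap, div_eq_zero_iff, or_iff_left hden.ne',
    add_eq_zero_iff_of_nonneg hSP_gap hDE_gap, mul_eq_zero_iff_right hS.ne',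
    mul_eq_zero_iff_left hc.ne', sub_eq_zero, sub_eq_zero, eq_comm (a := c * E)]
  exact and_comm

theorem network_heterogeneity_lowers_mu_general
    (K : Finset ℕ)
    (p : ℕ → ℝ) (hp : ∀ k ∈ K, 0 ≤ p k) (hpsum : ∑ k ∈ K, p k = 1)
    (σ ρ : ℝ) (hσ : 0 < σ) (hρ : 0 < ρ)
    (hR0 : 1 < ρ * ∑ k ∈ K, (k:ℝ) * p k)
    (Θ : ℝ) (hΘ : Θ ∈ Set.Ioo (0:ℝ) 1)
    (hfix : ρ * ∑ k ∈ K, (k:ℝ)^2 * p k / (1 + ρ * (k:ℝ) * Θ) = ∑ k ∈ K, (k:ℝ) * p k)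
    (h : ℕ → ℝ)
    (hh : ∀ k, h k = (p k * (k:ℝ)^4 / ((1 + σ * (k:ℝ) * ρ * Θ)^2 * (1 + ρ * (k:ℝ) * Θ))) /
      (∑ s ∈ K, p s * (s:ℝ)^4 / ((1 + σ * (s:ℝ) * ρ * Θ)^2 * (1 + ρ * (s:ℝ) * Θ))))
    (μN μN0 : ℝ)
    (hμN : μN = (1 / (σ * ρ * Θ)) * ∑ k ∈ K, h k / (k:ℝ))
    (hμN0 : μN0 = 1 / (σ * (ρ * (∑ k ∈ K, (k:ℝ) * p k) - 1))) :
    μN ≤ μN0 ∧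
    (μN = μN0 ↔ ∃ k₀ ∈ K, ∀ k ∈ K, p k ≠ 0 → k = k₀) := by
  obtain ⟨hΘ0, -⟩ := hΘ
  have hE : 0 < ∑ k ∈ K, (k : ℝ) * p k := pos_of_mul_pos_right (one_pos.trans hR0) hρ.le
  obtain ⟨hfp_le, hfp_eq⟩ := mul_sum_sub_one_le_of_endemic K p hp hpsum hρ hΘ0.le hE hfix
  obtain ⟨hle, heq⟩ := one_div_mul_div_le_one_div_and_eq_iff hσ (mul_pos hρ hΘ0)
    (sub_pos.2 hR0) (sum_mul_coinfectionWeight_pos hσ.le hρ.le hΘ0.le hp hE) hfp_le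
    (sum_natCast_mul_mul_sum_coinfectionWeight_le hσ.le hρ.le hΘ0.le hp hpsum)
  rw [hμN, hμN0, sum_div_natCast_eq_div K p h hh, mul_assoc σ]
  refine ⟨hle, heq.trans ⟨fun hgaps => hfp_eq.1 hgaps.1, fun hconc => ⟨hfp_eq.2 hconc, ?_⟩⟩⟩
  obtain ⟨k₀, -, hk₀⟩ := hconc
  rw [sum_mul_mul_eq_of_ne_zero_imp_eq hk₀ hpsum,
    sum_congr rfl fun k _ => mul_comm (p k) (k : ℝ)]

/-- On a heterogeneous host contact network, the aggregated single-to-coinfection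
ratio `μ(N)` is at most the homogeneous value `μ(N₀)`, with equality iff the
degree distribution is concentrated on a single degree. -/
theorem network_heterogeneity_lowers_mu
    (K : Finset ℕ) (hK : ∀ k ∈ K, 0 < k)
    (p : ℕ → ℝ) (hp : ∀ k ∈ K, 0 ≤ p k) (hpsum : ∑ k ∈ K, p k = 1)
    (σ ρ : ℝ) (hσ : 0 < σ) (hρ : 0 < ρ)
    (hR0 : 1 < ρ * ∑ k ∈ K, (k:ℝ) * p k)
    (Θ : ℝ) (hΘ : Θ ∈ Set.Ioo (0:ℝ) 1)
    (hfix : ρ * ∑ k ∈ K, (k:ℝ)^2 * p k / (1 + ρ * (k:ℝ) * Θ) = ∑ k ∈ K, (k:ℝ) * p k)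
    (h : ℕ → ℝ)
    (hh : ∀ k, h k = (p k * (k:ℝ)^4 / ((1 + σ * (k:ℝ) * ρ * Θ)^2 * (1 + ρ * (k:ℝ) * Θ))) /
      (∑ s ∈ K, p s * (s:ℝ)^4 / ((1 + σ * (s:ℝ) * ρ * Θ)^2 * (1 + ρ * (s:ℝ) * Θ))))
    (μN μN0 : ℝ)
    (hμN : μN = (1 / (σ * ρ * Θ)) * ∑ k ∈ K, h k / (k:ℝ))
    (hμN0 : μN0 = 1 / (σ * (ρ * (∑ k ∈ K, (k:ℝ) * p k) - 1))) :
    μN ≤ μN0 ∧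
    (μN = μN0 ↔ ∃ k₀ ∈ K, ∀ k ∈ K, p k ≠ 0 → k = k₀) :=
  network_heterogeneity_lowers_mu_general K p hp hpsum σ ρ hσ hρ hR0 Θ hΘ hfix h hh μN μN0 hμN hμN0
end
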